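/- arXiv:math/0610693 — 6 statements merged into one kernel-verified Lean document; each statement's English description precedes it below -/
import Mathlib

section
/- Suppose I + S is a packing of ℝ^d by unit cubes, 0 ∉ S, every cube I + s with s ∈ S intersects I, b < 0, and some v ∈ S has v_d = b. If the unit cube I is covered by the union of the cubes I + s (s ∈ S), then there exists w ∈ S with w_d = b + 1. -/
/-- The translate of the half-open unit cube `[0,1)^d` by `t`. -/
def cube {d : ℕ} (t : Fin d → ℝ) : Set (Fin d → ℝ) :=
  {x | ∀ i, t i ≤ x i ∧ x i < t i + 1}

theorem stmt_2 {d : ℕ} (S : Set (Fin d → ℝ))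
    (hpack : ∀ s ∈ S, ∀ s' ∈ S, s ≠ s' → Disjoint (cube s) (cube s'))
    (h0 : (0 : Fin d → ℝ) ∉ S)
    (hmeet : ∀ s ∈ S, (cube s ∩ cube (0 : Fin d → ℝ)).Nonempty)
    (b : ℝ) (hb : b < 0) (v : Fin d → ℝ) (hv : v ∈ S) (hvd : d ≠ 0)
    (hvcoord : v ⟨d - 1, Nat.sub_lt (Nat.pos_of_ne_zero hvd) one_pos⟩ = b)
    (hcover : cube (0 : Fin d → ℝ) ⊆ ⋃ s ∈ S, cube s) :
    ∃ w ∈ S, w ⟨d - 1, Nat.sub_lt (Nat.pos_of_ne_zero hvd) one_pos⟩ = b + 1 := by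
  set D : Fin d := ⟨d - 1, Nat.sub_lt (Nat.pos_of_ne_zero hvd) one_pos⟩ with hD
  obtain ⟨p, hpv, hp0⟩ := hmeet v hv
  have hpD1 : p D < b + 1 := by have := (hpv D).2; rw [hvcoord] at this; exact this
  have hpD0 : (0 : ℝ) ≤ p D := by simpa using (hp0 D).1
  have hb1 : 0 < b + 1 := lt_of_le_of_lt hpD0 hpD1
  -- the point y : p with last coordinate replaced by b+1, lies in cube 0
  set y : Fin d → ℝ := Function.update p D (b + 1) with hy
  have hy0 : y ∈ cube (0 : Fin d → ℝ) := by
    intro i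
    by_cases h : i = D
    · subst h
      simp [hy, Function.update_self]
      constructor <;> linarith
    · simp [hy, Function.update_of_ne h]
      simpa using hp0 i
  obtain ⟨w, hw, hyw⟩ := by
    have := hcover hy0
    simpa using this
  have hwD1 : w D ≤ b + 1 := by
    have := (hyw D).1; simpa [hy, Function.update_self] using this
  have hwD2 : b + 1 < w D + 1 := by
    have := (hyw D).2; simpa [hy, Function.update_self] using this
  rcases eq_or_lt_of_le hwD1 with heq | hlt
  · exact ⟨w, hw, heq⟩
  · exfalso
    have hwne : w ≠ v := by
      intro h; rw [h, hvcoord] at hwD2; linarith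
    -- the point z : p with last coordinate replaced by w D lies in cube w ∩ cube v
    set z : Fin d → ℝ := Function.update p D (w D) with hz
    have hzw : z ∈ cube w := by
      intro i
      by_cases h : i = D
      · subst h; simp [hz, Function.update_self]
      · have := hyw i
        simp only [hy, Function.update_of_ne h] at this
        simpa [hz, Function.update_of_ne h] using this
    have hzv : z ∈ cube v := by
      intro i
      by_cases h : i = D
      · subst h
        simp only [hz, Function.update_self, hvcoord]
        constructor <;> linarith
      · simpa [hz, Function.update_of_ne h] using hpv i
    exact Set.disjoint_left.mp (hpack w hw v hv hwne) hzw hzv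
end

section
/- Let I + S be a packing of ℝ^d by unit cubes such that for all t, t' ∈ S with t - t' ∈ {-1,0,1}^d the number of indices i with |t_i - t'_i| = 1 is even. Then the set F = ⋃_{s ∈ S}(I + s) is rough, i.e., for every u ∈ ℝ^d, if I + u ⊆ F then u ∈ S. -/
/-- The "cut value" of the cube `I + t` relative to the cube `I + u`, in coordinate `i`:
if `t i > u i` it is `t i - u i ∈ (0,1)` (for cubes meeting `I+u`), otherwise
`t i - u i + 1 ∈ (0,1]`. -/
noncomputable def cutv {d : ℕ} (u t : Fin d → ℝ) (i : Fin d) : ℝ :=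
  if u i < t i then t i - u i else t i - u i + 1

lemma cutv_pos {d : ℕ} {u t : Fin d → ℝ} {i : Fin d} (h : u i - 1 < t i) :
    0 < cutv u t i := by
  unfold cutv; split <;> linarith

lemma cutv_le_one {d : ℕ} {u t : Fin d → ℝ} {i : Fin d} (h : t i < u i + 1) :
    cutv u t i ≤ 1 := by
  unfold cutv; split <;> linarith

lemma cutv_lt_one {d : ℕ} {u t : Fin d → ℝ} {i : Fin d} (hH : u i < t i) (h : t i < u i + 1) :
    cutv u t i < 1 := by
  unfold cutv; rw [if_pos hH]; linarith

lemma cutv_eq_one_iff {d : ℕ} {u t : Fin d → ℝ} {i : Fin d} (h : t i < u i + 1) :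
    cutv u t i = 1 ↔ t i = u i := by
  unfold cutv; split <;> constructor <;> intro h1 <;> linarith

/-- Membership of the sample point `u i + θ` (with `θ ∈ [0,1)`) in the `i`-th slab of
the cube `I + t`, in terms of the cut value. -/
lemma mem_coord_iff {d : ℕ} {u t : Fin d → ℝ} {i : Fin d} {θ : ℝ} (h0 : 0 ≤ θ) (h1 : θ < 1) :
    (t i ≤ u i + θ ∧ u i + θ < t i + 1) ↔
      (if u i < t i then cutv u t i ≤ θ else θ < cutv u t i) := by
  unfold cutv
  split
  · rename_i hH
    constructor
    · rintro ⟨h2, _⟩; linarith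
    · intro h2; constructor <;> linarith
  · rename_i hL
    push_neg at hL
    constructor
    · rintro ⟨_, h2⟩; linarith
    · intro h2; constructor <;> linarith

lemma neg_one_pow_eq_of_even {a b : ℕ} (h : Even (a + b)) : ((-1 : ℤ)) ^ a = (-1) ^ b := by
  have h2 := Nat.even_add.mp h
  by_cases ha : Even a
  · rw [Even.neg_one_pow ha, Even.neg_one_pow (h2.mp ha)]
  · rw [Odd.neg_one_pow (Nat.not_even_iff_odd.mp ha),
      Odd.neg_one_pow (Nat.not_even_iff_odd.mp fun hb => ha (h2.mpr hb))]

theorem stmt_3 {d : ℕ} (S : Set (Fin d → ℝ))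
    (hpack : ∀ s ∈ S, ∀ s' ∈ S, s ≠ s' → Disjoint (cube s) (cube s'))
    (heven : ∀ t ∈ S, ∀ t' ∈ S, (∀ i, t i - t' i ∈ ({-1, 0, 1} : Set ℝ)) →
      Even (Finset.univ.filter (fun i => |t i - t' i| = 1)).card) :
    ∀ u : Fin d → ℝ, cube u ⊆ ⋃ s ∈ S, cube s → u ∈ S := by
  classical
  intro u hcov
  -- uniqueness of the covering cube through a point
  have huniq : ∀ {t t' x : Fin d → ℝ}, t ∈ S → t' ∈ S → x ∈ cube t → x ∈ cube t' → t = t' := by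
    intro t t' x ht ht' hx hx'
    by_contra hne
    exact Set.disjoint_left.mp (hpack t ht t' ht' hne) hx hx'
  -- the set of cubes meeting `cube u` is finite
  have hTfin : {t | t ∈ S ∧ (cube t ∩ cube u).Nonempty}.Finite := by
    apply Set.Finite.of_finite_image (f := fun t i => decide (u i < t i)) (Set.toFinite _)
    rintro t ⟨htS, x, hx, hxu⟩ t' ⟨htS', x', hx', hxu'⟩ heq
    have hiff : ∀ i, u i < t i ↔ u i < t' i := by
      intro i
      have := congrFun heq i
      simpa [decide_eq_decide] using this
    refine huniq htS htS' (x := fun i => max (t i) (max (t' i) (u i))) ?_ ?_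
    · intro i
      have h1 := hx i; have h2 := hxu i; have h3 := hx' i; have h4 := hxu' i
      by_cases hH : u i < t i
      · have hH' : u i < t' i := (hiff i).mp hH
        exact ⟨le_max_left _ _,
          max_lt (by linarith) (max_lt (by linarith [h3.1, h4.2]) (by linarith [h1.2, h2.1]))⟩
      · push_neg at hH
        have hH' : t' i ≤ u i := by
          by_contra hc; push_neg at hc; exact absurd ((hiff i).mpr hc) (not_lt.mpr hH)
        exact ⟨le_max_left _ _,
          max_lt (by linarith) (max_lt (by linarith [h1.2, h2.1]) (by linarith [h1.2, h2.1]))⟩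
    · intro i
      have h1 := hx i; have h2 := hxu i; have h3 := hx' i; have h4 := hxu' i
      by_cases hH : u i < t i
      · have hH' : u i < t' i := (hiff i).mp hH
        refine ⟨le_trans (le_max_left _ _) (le_max_right _ _),
          max_lt (by linarith [h1.1, h2.2]) (max_lt (by linarith) (by linarith [h3.2, h4.1]))⟩
      · push_neg at hH
        have hH' : t' i ≤ u i := by
          by_contra hc; push_neg at hc; exact absurd ((hiff i).mpr hc) (not_lt.mpr hH)
        refine ⟨le_trans (le_max_left _ _) (le_max_right _ _),
          max_lt (by linarith [h3.2, h4.1]) (max_lt (by linarith) (by linarith [h3.2, h4.1]))⟩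
  have hmemT : ∀ {t : Fin d → ℝ},
      t ∈ hTfin.toFinset ↔ t ∈ S ∧ (cube t ∩ cube u).Nonempty := by
    intro t; rw [Set.Finite.mem_toFinset]; rfl
  have hbd : ∀ t ∈ hTfin.toFinset, ∀ i, u i - 1 < t i ∧ t i < u i + 1 := by
    intro t ht i
    obtain ⟨htS, x, hx, hxu⟩ := hmemT.mp ht
    have h1 := hx i; have h2 := hxu i
    exact ⟨by linarith [h1.2, h2.1], by linarith [h1.1, h2.2]⟩
  have hc0 : ∀ t ∈ hTfin.toFinset, ∀ i, 0 < cutv u t i :=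
    fun t ht i => cutv_pos (hbd t ht i).1
  have hc1 : ∀ t ∈ hTfin.toFinset, ∀ i, cutv u t i ≤ 1 :=
    fun t ht i => cutv_le_one (hbd t ht i).2
  -- main induction: every relevant cube agrees with u in at least k coordinates
  have key : ∀ k : ℕ, k ≤ d → ∀ t ∈ hTfin.toFinset,
      k ≤ (Finset.univ.filter fun i => cutv u t i = 1).card := by
    intro k
    induction k with
    | zero => intro _ t _; exact Nat.zero_le _
    | succ k ih =>
      intro hkd B hB
      by_contra hcon
      push_neg at hcon
      have hIH : ∀ t ∈ hTfin.toFinset, k ≤ (Finset.univ.filter fun i => cutv u t i = 1).card :=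
        ih (by omega)
      have hFB : (Finset.univ.filter fun i => cutv u B i = 1).card = k := by
        have := hIH B hB; omega
      set M : Finset (Fin d) := Finset.univ.filter fun i => cutv u B i = 1 with hMdef
      have hMcard : M.card = k := hFB
      have hBS : B ∈ S := (hmemT.mp hB).1
      have hMmem : ∀ i, i ∈ M ↔ cutv u B i = 1 := by
        intro i; rw [hMdef]; simp
      have hBu : ∀ i ∈ M, B i = u i := by
        intro i hi
        exact (cutv_eq_one_iff (hbd B hB i).2).mp ((hMmem i).mp hi)
      obtain ⟨j0, hj0⟩ : ∃ j, j ∉ M := by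
        by_contra hc
        push_neg at hc
        have h1 : M = Finset.univ := Finset.eq_univ_of_forall hc
        have h2 : M.card = d := by rw [h1]; simp
        omega
      have hTne : hTfin.toFinset.Nonempty := ⟨B, hB⟩
      -- lower sample points
      obtain ⟨zl, hzl0, hzlt, hgap⟩ : ∃ zl : ℝ → Fin d → ℝ,
          (∀ θ i, 0 < θ → 0 ≤ zl θ i) ∧ (∀ θ i, 0 < θ → zl θ i < θ) ∧
          (∀ θ i t, t ∈ hTfin.toFinset → cutv u t i < θ → cutv u t i ≤ zl θ i) := by
        refine ⟨fun θ i => hTfin.toFinset.sup' hTne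
          (fun t => if cutv u t i < θ then cutv u t i else 0), ?_, ?_, ?_⟩
        · intro θ i hθ
          refine le_trans ?_ (Finset.le_sup'
            (fun t => if cutv u t i < θ then cutv u t i else 0) hB)
          split
          · exact le_of_lt (hc0 B hB i)
          · exact le_refl 0
        · intro θ i hθ
          rw [Finset.sup'_lt_iff hTne]
          intro t ht
          split
          · assumption
          · exact hθ
        · intro θ i t ht hlt
          have := Finset.le_sup' (fun t => if cutv u t i < θ then cutv u t i else 0) ht
          rw [if_pos hlt] at this
          exact this
      have hγpos : ∀ i, 0 < cutv u B i := fun i => hc0 B hB i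
      have hγlt1 : ∀ i, i ∉ M → cutv u B i < 1 := by
        intro i hi
        have h1 := hc1 B hB i
        have h2 : cutv u B i ≠ 1 := fun h => hi ((hMmem i).mpr h)
        exact lt_of_le_of_ne h1 h2
      -- sample offsets
      obtain ⟨o, homem, hot, hof⟩ : ∃ o : Fin d → Bool → ℝ,
          (∀ i b, i ∈ M → o i b = zl 1 i) ∧
          (∀ i, i ∉ M → o i true = cutv u B i) ∧
          (∀ i, i ∉ M → o i false = zl (cutv u B i) i) :=
        ⟨fun i b => if i ∈ M then zl 1 i else if b then cutv u B i else zl (cutv u B i) i,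
          fun i b h => by simp [h], fun i h => by simp [h], fun i h => by simp [h]⟩
      have ho0 : ∀ i b, 0 ≤ o i b ∧ o i b < 1 := by
        intro i b
        by_cases hiM : i ∈ M
        · rw [homem i b hiM]
          exact ⟨hzl0 1 i one_pos, hzlt 1 i one_pos⟩
        · cases b
          · rw [hof i hiM]
            exact ⟨hzl0 _ _ (hγpos i), lt_trans (hzlt _ _ (hγpos i)) (hγlt1 i hiM)⟩
          · rw [hot i hiM]
            exact ⟨le_of_lt (hγpos i), hγlt1 i hiM⟩
      -- the sample points
      have hXu : ∀ s : Fin d → Bool, (fun i => u i + o i (s i)) ∈ cube u := by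
        intro s i
        have := ho0 i (s i)
        show u i ≤ u i + o i (s i) ∧ u i + o i (s i) < u i + 1
        exact ⟨by linarith [this.1], by linarith [this.2]⟩
      have hex : ∀ s : Fin d → Bool, ∃ t, t ∈ S ∧ (fun i => u i + o i (s i)) ∈ cube t := by
        intro s
        have := hcov (hXu s)
        simpa using this
      choose τ hτS hτm using hex
      have hτT : ∀ s, τ s ∈ hTfin.toFinset := by
        intro s
        rw [hmemT]
        exact ⟨hτS s, ⟨_, hτm s, hXu s⟩⟩
      -- signs
      obtain ⟨g, hgM, hgt, hgf⟩ : ∃ g : Fin d → Bool → ℤ,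
          (∀ i b, i ∈ M → g i b = 1) ∧ (∀ i, i ∉ M → g i true = -1) ∧
          (∀ i, i ∉ M → g i false = 1) :=
        ⟨fun i b => if i ∈ M then 1 else if b then -1 else 1,
          fun i b h => by simp [h], fun i h => by simp [h], fun i h => by simp [h]⟩
      -- total signed sum is zero
      have hsum0 : (∑ s : Fin d → Bool, ∏ i, g i (s i)) = 0 := by
        have h1 : (∏ i, ∑ b, g i b)
            = ∑ s ∈ Fintype.piFinset (fun _ : Fin d => (Finset.univ : Finset Bool)),
                ∏ i, g i (s i) := Finset.prod_univ_sum _ _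
        rw [Fintype.piFinset_univ] at h1
        rw [← h1]
        apply Finset.prod_eq_zero (Finset.mem_univ j0)
        rw [Fintype.sum_bool, hgt j0 hj0, hgf j0 hj0]
        ring
      -- fiber decomposition over the covering cubes
      have hfiber : (∑ t ∈ hTfin.toFinset,
          ∑ s ∈ Finset.univ.filter (fun s : Fin d → Bool => (fun i => u i + o i (s i)) ∈ cube t),
            ∏ i, g i (s i)) = 0 := by
        rw [← hsum0,
          ← Finset.sum_fiberwise_of_maps_to (fun s _ => hτT s) (fun s => ∏ i, g i (s i))]
        apply Finset.sum_congr rfl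
        intro t ht
        apply Finset.sum_congr ?_ (fun _ _ => rfl)
        ext s
        simp only [Finset.mem_filter, Finset.mem_univ, true_and]
        constructor
        · intro h; exact huniq (hτS s) ((hmemT.mp ht).1) (hτm s) h
        · intro h; rw [← h]; exact hτm s
      -- factorization of each fiber sum
      have hW : ∀ t ∈ hTfin.toFinset,
          (∑ s ∈ Finset.univ.filter
              (fun s : Fin d → Bool => (fun i => u i + o i (s i)) ∈ cube t),
            ∏ i, g i (s i))
          = ∏ i, (∑ b, g i b *
              (if (t i ≤ u i + o i b ∧ u i + o i b < t i + 1) then 1 else 0)) := by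
        intro t _
        rw [Finset.sum_filter]
        have hpt : ∀ s : Fin d → Bool,
            (if (fun i => u i + o i (s i)) ∈ cube t then (∏ i, g i (s i)) else 0)
            = ∏ i, (g i (s i) *
                (if (t i ≤ u i + o i (s i) ∧ u i + o i (s i) < t i + 1) then 1 else 0)) := by
          intro s
          by_cases hmem : (fun i => u i + o i (s i)) ∈ cube t
          · have hall : ∀ i ∈ Finset.univ,
                (t i ≤ u i + o i (s i) ∧ u i + o i (s i) < t i + 1) := fun i _ => hmem i
            rw [if_pos hmem, Finset.prod_mul_distrib, Finset.prod_boole, if_pos hall, mul_one]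
          · rw [if_neg hmem]
            have hex2 : ∃ i, ¬(t i ≤ u i + o i (s i) ∧ u i + o i (s i) < t i + 1) := by
              by_contra hc
              push_neg at hc
              exact hmem fun i => ⟨(hc i).1, (hc i).2⟩
            obtain ⟨i0, hi0⟩ := hex2
            symm
            apply Finset.prod_eq_zero (Finset.mem_univ i0)
            rw [if_neg hi0, mul_zero]
        rw [Finset.sum_congr rfl (fun s _ => hpt s), Finset.prod_univ_sum, Fintype.piFinset_univ]
      -- evaluation of each factor
      have hfct : ∀ t ∈ hTfin.toFinset, ∀ i : Fin d,
          (∑ b, g i b * (if (t i ≤ u i + o i b ∧ u i + o i b < t i + 1) then 1 else 0))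
          = if i ∈ M then (if u i ≤ t i then 2 else 0)
            else (if cutv u t i = cutv u B i then (if u i < t i then -1 else 1) else 0) := by
        intro t ht i
        have hb := hbd t ht i
        have hcle := hc1 t ht i
        rw [Fintype.sum_bool]
        by_cases hiM : i ∈ M
        · rw [hgM i true hiM, hgM i false hiM, homem i true hiM, homem i false hiM,
            if_pos hiM]
          simp only [one_mul]
          have hC : (t i ≤ u i + zl 1 i ∧ u i + zl 1 i < t i + 1) ↔
              (if u i < t i then cutv u t i ≤ zl 1 i else zl 1 i < cutv u t i) :=
            mem_coord_iff (hzl0 1 i one_pos) (hzlt 1 i one_pos)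
          by_cases hH : u i < t i
          · have h1 : cutv u t i ≤ zl 1 i := hgap 1 i t ht (cutv_lt_one hH hb.2)
            have h2 : (t i ≤ u i + zl 1 i ∧ u i + zl 1 i < t i + 1) :=
              hC.mpr (by rw [if_pos hH]; exact h1)
            rw [if_pos h2, if_pos (le_of_lt hH)]
            ring
          · push_neg at hH
            by_cases hE : t i = u i
            · have h1 : cutv u t i = 1 := (cutv_eq_one_iff hb.2).mpr hE
              have h2 : (t i ≤ u i + zl 1 i ∧ u i + zl 1 i < t i + 1) :=
                hC.mpr (by rw [if_neg (not_lt.mpr hH), h1]; exact hzlt 1 i one_pos)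
              rw [if_pos h2, if_pos (le_of_eq hE.symm)]
              ring
            · have hlt : t i < u i := lt_of_le_of_ne hH hE
              have hcut1 : cutv u t i < 1 :=
                lt_of_le_of_ne hcle (fun h => hE ((cutv_eq_one_iff hb.2).mp h))
              have h1 : cutv u t i ≤ zl 1 i := hgap 1 i t ht hcut1
              have h2 : ¬(t i ≤ u i + zl 1 i ∧ u i + zl 1 i < t i + 1) := by
                intro hcond
                have := hC.mp hcond
                rw [if_neg (not_lt.mpr hH)] at this
                linarith
              rw [if_neg h2, if_neg (not_le.mpr hlt)]
              ring
        · rw [hgt i hiM, hgf i hiM, hot i hiM, hof i hiM, if_neg hiM]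
          have hγp : 0 < cutv u B i := hγpos i
          have hγ1 : cutv u B i < 1 := hγlt1 i hiM
          have hCγ : (t i ≤ u i + cutv u B i ∧ u i + cutv u B i < t i + 1) ↔
              (if u i < t i then cutv u t i ≤ cutv u B i else cutv u B i < cutv u t i) :=
            mem_coord_iff (le_of_lt hγp) hγ1
          have hCz : (t i ≤ u i + zl (cutv u B i) i ∧ u i + zl (cutv u B i) i < t i + 1) ↔
              (if u i < t i then cutv u t i ≤ zl (cutv u B i) i
               else zl (cutv u B i) i < cutv u t i) :=
            mem_coord_iff (hzl0 _ _ hγp) (lt_trans (hzlt _ _ hγp) hγ1)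
          by_cases hH : u i < t i
          · rcases lt_trichotomy (cutv u t i) (cutv u B i) with hlt | heq | hgt'
            · have e1 : (t i ≤ u i + cutv u B i ∧ u i + cutv u B i < t i + 1) :=
                hCγ.mpr (by rw [if_pos hH]; exact le_of_lt hlt)
              have e2 : (t i ≤ u i + zl (cutv u B i) i ∧ u i + zl (cutv u B i) i < t i + 1) :=
                hCz.mpr (by rw [if_pos hH]; exact hgap _ i t ht hlt)
              rw [if_pos e1, if_pos e2, if_neg (ne_of_lt hlt)]
              ring
            · have e1 : (t i ≤ u i + cutv u B i ∧ u i + cutv u B i < t i + 1) :=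
                hCγ.mpr (by rw [if_pos hH]; exact le_of_eq heq)
              have e2 : ¬(t i ≤ u i + zl (cutv u B i) i ∧ u i + zl (cutv u B i) i < t i + 1) := by
                intro hcond
                have := hCz.mp hcond
                rw [if_pos hH] at this
                have := hzlt (cutv u B i) i hγp
                linarith
              rw [if_pos e1, if_neg e2, if_pos heq, if_pos hH]
              ring
            · have e1 : ¬(t i ≤ u i + cutv u B i ∧ u i + cutv u B i < t i + 1) := by
                intro hcond
                have := hCγ.mp hcond
                rw [if_pos hH] at this
                linarith
              have e2 : ¬(t i ≤ u i + zl (cutv u B i) i ∧ u i + zl (cutv u B i) i < t i + 1) := by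
                intro hcond
                have := hCz.mp hcond
                rw [if_pos hH] at this
                have := hzlt (cutv u B i) i hγp
                linarith
              rw [if_neg e1, if_neg e2, if_neg (ne_of_gt hgt')]
              ring
          · rcases lt_trichotomy (cutv u t i) (cutv u B i) with hlt | heq | hgt'
            · have e1 : ¬(t i ≤ u i + cutv u B i ∧ u i + cutv u B i < t i + 1) := by
                intro hcond
                have := hCγ.mp hcond
                rw [if_neg hH] at this
                linarith
              have e2 : ¬(t i ≤ u i + zl (cutv u B i) i ∧ u i + zl (cutv u B i) i < t i + 1) := by
                intro hcond
                have := hCz.mp hcond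
                rw [if_neg hH] at this
                have := hgap (cutv u B i) i t ht hlt
                linarith
              rw [if_neg e1, if_neg e2, if_neg (ne_of_lt hlt)]
              ring
            · have e1 : ¬(t i ≤ u i + cutv u B i ∧ u i + cutv u B i < t i + 1) := by
                intro hcond
                have := hCγ.mp hcond
                rw [if_neg hH] at this
                linarith
              have e2 : (t i ≤ u i + zl (cutv u B i) i ∧ u i + zl (cutv u B i) i < t i + 1) :=
                hCz.mpr (by rw [if_neg hH, heq]; exact hzlt _ i hγp)
              rw [if_neg e1, if_pos e2, if_pos heq, if_neg hH]
              ring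
            · have e1 : (t i ≤ u i + cutv u B i ∧ u i + cutv u B i < t i + 1) :=
                hCγ.mpr (by rw [if_neg hH]; exact hgt')
              have e2 : (t i ≤ u i + zl (cutv u B i) i ∧ u i + zl (cutv u B i) i < t i + 1) :=
                hCz.mpr (by rw [if_neg hH]; exact lt_trans (hzlt _ i hγp) hgt')
              rw [if_pos e1, if_pos e2, if_neg (ne_of_gt hgt')]
              ring
      -- the per-cube "type sign"
      have hsq : ∀ t : Fin d → ℝ,
          (∏ i ∈ Mᶜ, (if u i < t i then (-1 : ℤ) else 1))
            * (∏ i ∈ Mᶜ, (if u i < t i then (-1 : ℤ) else 1)) = 1 := by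
        intro t
        rw [← Finset.prod_mul_distrib]
        apply Finset.prod_eq_one
        intro i _
        by_cases h : u i < t i <;> simp [h]
      -- value of each fiber sum: zero case
      have hval0 : ∀ t ∈ hTfin.toFinset,
          (¬ ∀ i, i ∉ M → cutv u t i = cutv u B i) →
          (∑ s ∈ Finset.univ.filter
              (fun s : Fin d → Bool => (fun i => u i + o i (s i)) ∈ cube t),
            ∏ i, g i (s i)) = 0 := by
        intro t ht hgood
        rw [hW t ht, Finset.prod_congr rfl (fun i _ => hfct t ht i)]
        push_neg at hgood
        obtain ⟨i0, hi0M, hi0⟩ := hgood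
        apply Finset.prod_eq_zero (Finset.mem_univ i0)
        rw [if_neg hi0M, if_neg hi0]
      -- value of each fiber sum: nonzero case
      have hval1 : ∀ t ∈ hTfin.toFinset,
          (∀ i, i ∉ M → cutv u t i = cutv u B i) →
          ((∀ i ∈ M, t i = u i) ∧
            (∑ s ∈ Finset.univ.filter
              (fun s : Fin d → Bool => (fun i => u i + o i (s i)) ∈ cube t),
              ∏ i, g i (s i))
              = 2 ^ k * ∏ i ∈ Mᶜ, (if u i < t i then (-1 : ℤ) else 1)) := by
        intro t ht hgood
        have hsub : (Finset.univ.filter fun i => cutv u t i = 1) ⊆ M := by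
          intro i hi
          rw [Finset.mem_filter] at hi
          by_contra hiM
          have hg1 := hgood i hiM
          have hg2 := hγlt1 i hiM
          rw [hi.2] at hg1
          linarith
        have hMeq : (Finset.univ.filter fun i => cutv u t i = 1) = M :=
          Finset.eq_of_subset_of_card_le hsub (by rw [hMcard]; exact hIH t ht)
        have htu : ∀ i ∈ M, t i = u i := by
          intro i hi
          have h1 : cutv u t i = 1 := by
            have h2 : i ∈ Finset.univ.filter fun i => cutv u t i = 1 := by rw [hMeq]; exact hi
            exact (Finset.mem_filter.mp h2).2
          exact (cutv_eq_one_iff (hbd t ht i).2).mp h1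
        refine ⟨htu, ?_⟩
        rw [hW t ht, Finset.prod_congr rfl (fun i _ => hfct t ht i),
          ← Finset.prod_mul_prod_compl M]
        have hMpart : (∏ i ∈ M,
            (if i ∈ M then (if u i ≤ t i then (2:ℤ) else 0)
             else (if cutv u t i = cutv u B i then (if u i < t i then -1 else 1) else 0)))
            = 2 ^ k := by
          rw [Finset.prod_congr rfl (fun i hi => ?_), Finset.prod_const, hMcard]
          rw [if_pos hi, if_pos (le_of_eq (htu i hi).symm)]
        have hCpart : (∏ i ∈ Mᶜ,
            (if i ∈ M then (if u i ≤ t i then (2:ℤ) else 0)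
             else (if cutv u t i = cutv u B i then (if u i < t i then -1 else 1) else 0)))
            = ∏ i ∈ Mᶜ, (if u i < t i then (-1 : ℤ) else 1) := by
          apply Finset.prod_congr rfl
          intro i hi
          rw [Finset.mem_compl] at hi
          rw [if_neg hi, if_pos (hgood i hi)]
        rw [hMpart, hCpart]
      -- parity: all nonzero fiber sums have the same sign as that of B
      have hparity : ∀ t ∈ hTfin.toFinset,
          (∀ i, i ∉ M → cutv u t i = cutv u B i) → (∀ i ∈ M, t i = u i) →
          (∏ i ∈ Mᶜ, (if u i < t i then (-1 : ℤ) else 1))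
            = ∏ i ∈ Mᶜ, (if u i < B i then (-1 : ℤ) else 1) := by
        intro t ht hgood htu
        have htS : t ∈ S := (hmemT.mp ht).1
        have hco : ∀ i, (i ∈ M → t i - B i = 0) ∧
            (i ∉ M → ((u i < t i ↔ u i < B i) → t i - B i = 0) ∧
              ((¬(u i < t i ↔ u i < B i)) → t i - B i = 1 ∨ t i - B i = -1)) := by
          intro i
          constructor
          · intro hi; rw [htu i hi, hBu i hi]; ring
          · intro hi
            have hcut := hgood i hi
            unfold cutv at hcut
            constructor
            · intro hiff
              by_cases h : u i < t i
              · rw [if_pos h, if_pos (hiff.mp h)] at hcut; linarith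
              · rw [if_neg h, if_neg (fun h' => h (hiff.mpr h'))] at hcut; linarith
            · intro hniff
              by_cases h : u i < t i
              · have h' : ¬ u i < B i := fun h'' => hniff ⟨fun _ => h'', fun _ => h⟩
                rw [if_pos h, if_neg h'] at hcut
                left; linarith
              · have h' : u i < B i := by
                  by_contra h''
                  exact hniff ⟨fun h3 => absurd h3 h, fun h3 => absurd h3 h''⟩
                rw [if_neg h, if_pos h'] at hcut
                right; linarith
        have hint : ∀ i, t i - B i ∈ ({-1, 0, 1} : Set ℝ) := by
          intro i
          simp only [Set.mem_insert_iff, Set.mem_singleton_iff]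
          by_cases hi : i ∈ M
          · right; left; exact (hco i).1 hi
          · by_cases hiff : (u i < t i ↔ u i < B i)
            · right; left; exact ((hco i).2 hi).1 hiff
            · rcases ((hco i).2 hi).2 hiff with h | h
              · right; right; exact h
              · left; exact h
        have heq := heven t htS B hBS hint
        have hfilt : (Finset.univ.filter fun i => |t i - B i| = 1)
            = Mᶜ.filter fun i => ¬(u i < t i ↔ u i < B i) := by
          ext i
          simp only [Finset.mem_filter, Finset.mem_univ, true_and, Finset.mem_compl]
          constructor
          · intro habs
            by_cases hi : i ∈ M
            · rw [(hco i).1 hi] at habs; norm_num at habs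
            · refine ⟨hi, ?_⟩
              intro hiff
              rw [((hco i).2 hi).1 hiff] at habs
              norm_num at habs
          · rintro ⟨hi, hniff⟩
            rcases ((hco i).2 hi).2 hniff with h | h <;> rw [h] <;> norm_num
        rw [hfilt] at heq
        have hprod2 : (∏ i ∈ Mᶜ, (if u i < t i then (-1 : ℤ) else 1))
            * (∏ i ∈ Mᶜ, (if u i < B i then (-1 : ℤ) else 1))
            = ∏ i ∈ Mᶜ, (if ¬(u i < t i ↔ u i < B i) then (-1 : ℤ) else 1) := by
          rw [← Finset.prod_mul_distrib]
          apply Finset.prod_congr rfl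
          intro i _
          by_cases h1 : u i < t i <;> by_cases h2 : u i < B i <;>
            simp [h1, h2]
        have hone : (∏ i ∈ Mᶜ, (if ¬(u i < t i ↔ u i < B i) then (-1 : ℤ) else 1)) = 1 := by
          rw [Finset.prod_ite, Finset.prod_const, Finset.prod_const_one, mul_one,
            Even.neg_one_pow heq]
        have h3 : (∏ i ∈ Mᶜ, (if u i < t i then (-1 : ℤ) else 1))
            * (∏ i ∈ Mᶜ, (if u i < B i then (-1 : ℤ) else 1)) = 1 := by
          rw [hprod2, hone]
        calc (∏ i ∈ Mᶜ, (if u i < t i then (-1 : ℤ) else 1))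
            = (∏ i ∈ Mᶜ, (if u i < t i then (-1 : ℤ) else 1))
              * ((∏ i ∈ Mᶜ, (if u i < B i then (-1 : ℤ) else 1))
                * (∏ i ∈ Mᶜ, (if u i < B i then (-1 : ℤ) else 1))) := by rw [hsq B, mul_one]
          _ = ((∏ i ∈ Mᶜ, (if u i < t i then (-1 : ℤ) else 1))
                * (∏ i ∈ Mᶜ, (if u i < B i then (-1 : ℤ) else 1)))
              * (∏ i ∈ Mᶜ, (if u i < B i then (-1 : ℤ) else 1)) := by ring
          _ = ∏ i ∈ Mᶜ, (if u i < B i then (-1 : ℤ) else 1) := by rw [h3, one_mul]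
      -- a positivity helper
      have hposval : ∀ a : ℤ, a * a = 1 → 0 < a * (2 ^ k * a) := by
        intro a ha
        have h1 : a * (2 ^ k * a) = 2 ^ k * (a * a) := by ring
        rw [h1, ha, mul_one]
        positivity
      -- now derive the contradiction
      have hfinal : (0 : ℤ) < ∑ t ∈ hTfin.toFinset,
          (∏ i ∈ Mᶜ, (if u i < B i then (-1 : ℤ) else 1)) *
          (∑ s ∈ Finset.univ.filter
              (fun s : Fin d → Bool => (fun i => u i + o i (s i)) ∈ cube t),
            ∏ i, g i (s i)) := by
        apply Finset.sum_pos'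
        · intro t ht
          by_cases hgood : ∀ i, i ∉ M → cutv u t i = cutv u B i
          · obtain ⟨htu, h⟩ := hval1 t ht hgood
            rw [h, hparity t ht hgood htu]
            exact le_of_lt (hposval _ (hsq B))
          · rw [hval0 t ht hgood, mul_zero]
        · refine ⟨B, hB, ?_⟩
          obtain ⟨htu, h⟩ := hval1 B hB (fun _ _ => rfl)
          rw [h]
          exact hposval _ (hsq B)
      rw [← Finset.mul_sum, hfiber, mul_zero] at hfinal
      exact lt_irrefl 0 hfinal
  -- conclude
  have hu : u ∈ cube u := fun i => ⟨le_refl _, lt_add_one _⟩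
  obtain ⟨t, htS, hut⟩ : ∃ t, t ∈ S ∧ u ∈ cube t := by simpa using hcov hu
  have htT : t ∈ hTfin.toFinset := hmemT.mpr ⟨htS, ⟨u, hut, hu⟩⟩
  have hcard := key d le_rfl t htT
  have hfull : (Finset.univ.filter fun i => cutv u t i = 1) = Finset.univ := by
    apply Finset.eq_univ_of_card
    have hle : (Finset.univ.filter fun i => cutv u t i = 1).card ≤ d := by
      have := Finset.card_filter_le (Finset.univ : Finset (Fin d)) fun i => cutv u t i = 1
      simpa using this
    simp only [Fintype.card_fin]
    omega
  have htu : t = u := by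
    funext i
    have hi : cutv u t i = 1 := by
      have h1 : i ∈ Finset.univ.filter fun i => cutv u t i = 1 := by
        rw [hfull]; exact Finset.mem_univ i
      exact (Finset.mem_filter.mp h1).2
    have h2 := hut i
    have hL : ¬ u i < t i := not_lt.mpr h2.1
    unfold cutv at hi
    rw [if_neg hL] at hi
    linarith [h2.1, hi]
  rw [← htu]
  exact htS
end

section
/- Let I + S be a packing of ℝ^d by unit cubes and u ∉ S. If I + u ⊆ ⋃_{s ∈ S}(I + s), then there exist t, t' ∈ S such that t - t' ∈ {-1,0,1}^d and the number of indices i with |t_i - t'_i| = 1 is odd. -/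
/-!
Translating by `-u`, assume `u = 0`. Only finitely many cubes of `S` meet `I = [0,1)^d`, and they
tile it. On `[0,1)` the indicator of `[a, a + 1)`, `-1 < a < 1`, is constant but for one jump, of
sign `-jumpSign a`, at `cutPoint a ∈ (0,1)`; `cutPoint 0 = 1` stands for "no jump". Two tiles
have the same cut points iff they differ by a vector of `{-1,0,1}^d`, and then their signs
`∏ i, jumpSign (s i)` differ by `(-1) ^ #{i | |s i - s' i| = 1}`. So if no pair is odd, the sign of
a tile is a function of its cut-point vector.

Let `s₀ ≠ 0` be a tile with fewest zero coordinates and `y = cutPoint ∘ s₀`. Test the identity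
`∑ₛ 1_{s + I} = 1` on `I` against the product over `i` of `δ_0` (if `y i = 1`) or
`δ_{p i} - δ_{y i}` (if `y i < 1`, with `p i` just below `y i`). This measure has total mass `0`,
but by minimality of `s₀` it sees exactly the tiles with cut-point vector `y`, all with the same
nonzero sign. Hence every tile is `0`, contradicting `u ∉ S`.
-/

namespace CubePacking

open Finset

noncomputable def unitInd (a t : ℝ) : ℝ := if a ≤ t ∧ t < a + 1 then 1 else 0

noncomputable def cutPoint (a : ℝ) : ℝ := if a ≤ 0 then a + 1 else a

noncomputable def jumpSign (a : ℝ) : ℝ := if a ≤ 0 then 1 else -1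

/-- The value of `δ_0` (if `y = 1`) or of `δ_p - δ_y` (`p` just below `y`) on `unitInd a`. -/
noncomputable def jumpWeight (y a : ℝ) : ℝ :=
  if y = 1 then (if a ≤ 0 then 1 else 0) else if cutPoint a = y then jumpSign a else 0

lemma cutPoint_pos {a : ℝ} (ha : -1 < a) : 0 < cutPoint a := by
  unfold cutPoint; split_ifs <;> linarith

lemma cutPoint_le_one {a : ℝ} (ha : a < 1) : cutPoint a ≤ 1 := by
  unfold cutPoint; split_ifs <;> linarith

lemma cutPoint_eq_one_iff {a : ℝ} (ha : a < 1) : cutPoint a = 1 ↔ a = 0 := by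
  unfold cutPoint; split_ifs <;> constructor <;> intro <;> linarith

lemma jumpSign_ne_zero (a : ℝ) : jumpSign a ≠ 0 := by
  unfold jumpSign; split_ifs <;> norm_num

lemma sub_mem_of_cutPoint_eq {a b : ℝ} (h : cutPoint a = cutPoint b) :
    a - b ∈ ({-1, 0, 1} : Set ℝ) := by
  unfold cutPoint at h
  simp only [Set.mem_insert_iff, Set.mem_singleton_iff]
  split_ifs at h <;> grind

lemma jumpSign_eq_of_cutPoint_eq {a b : ℝ} (h : cutPoint a = cutPoint b) :
    jumpSign a = (if |a - b| = 1 then -1 else 1) * jumpSign b := by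
  unfold cutPoint at h
  unfold jumpSign
  split_ifs at h ⊢ <;> grind

lemma unitInd_zero {a : ℝ} (ha : -1 < a) : unitInd a 0 = if a ≤ 0 then 1 else 0 := by
  unfold unitInd; split_ifs <;> grind

lemma unitInd_sub_unitInd {a p y : ℝ} (hp : 0 ≤ p) (hpy : p < y) (hy : y < 1)
    (hgap : cutPoint a ∉ Set.Ioo p y) :
    unitInd a p - unitInd a y = if cutPoint a = y then jumpSign a else 0 := by
  unfold unitInd cutPoint jumpSign at *
  simp only [Set.mem_Ioo, not_and, not_lt] at hgap
  split_ifs at * <;> grind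

lemma exists_Ico_forall_notMem_Ioo (E : Finset ℝ) {a y : ℝ} (hay : a < y) :
    ∃ p, a ≤ p ∧ p < y ∧ ∀ e ∈ E, e ∉ Set.Ioo p y := by
  classical
  let F := insert a (E.filter (· < y))
  refine ⟨F.max' (insert_nonempty _ _), le_max' _ _ (mem_insert_self _ _), ?_, ?_⟩
  · refine (max'_lt_iff _ _).2 fun b hb => ?_
    rcases mem_insert.1 hb with rfl | hb
    · exact hay
    · exact (mem_filter.1 hb).2
  · rintro e he ⟨hpe, hey⟩
    exact (le_max' F e (mem_insert_of_mem (mem_filter.2 ⟨he, hey⟩))).not_gt hpe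

lemma indicator_cube_eq_prod_unitInd {d : ℕ} (s x : Fin d → ℝ) :
    (cube s).indicator 1 x = ∏ i, unitInd (s i) (x i) := by
  classical
  simp [Set.indicator_apply, cube, unitInd, prod_boole]

variable {d : ℕ} {T : Finset (Fin d → ℝ)}

theorem prod_sum_eq_sum_prod_sum_unitInd (htile : ∀ x ∈ cube 0, ∃! s, s ∈ T ∧ x ∈ cube s)
    (P : Fin d → Finset ℝ) (hP : ∀ i, ∀ t ∈ P i, 0 ≤ t ∧ t < 1) (c : Fin d → ℝ → ℝ) :
    ∏ i, ∑ t ∈ P i, c i t = ∑ s ∈ T, ∏ i, ∑ t ∈ P i, c i t * unitInd (s i) t := by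
  classical
  have hcount : ∀ x ∈ cube 0, ∑ s ∈ T, (cube s).indicator (1 : (Fin d → ℝ) → ℝ) x = 1 := by
    intro x hx
    obtain ⟨s₀, ⟨hs₀, hxs₀⟩, huniq⟩ := htile x hx
    rw [sum_eq_single_of_mem s₀ hs₀ fun s hs hne =>
      Set.indicator_of_notMem (fun hxs => hne (huniq s ⟨hs, hxs⟩)) _]
    exact Set.indicator_of_mem hxs₀ _
  calc ∏ i, ∑ t ∈ P i, c i t = ∑ x ∈ Fintype.piFinset P, ∏ i, c i (x i) := prod_univ_sum _ _
    _ = ∑ x ∈ Fintype.piFinset P, ∑ s ∈ T,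
          (∏ i, c i (x i)) * (cube s).indicator 1 x := by
      refine sum_congr rfl fun x hx => ?_
      have hx0 : x ∈ cube 0 := fun i => by simpa using hP i _ (Fintype.mem_piFinset.1 hx i)
      rw [← mul_sum, hcount x hx0, mul_one]
    _ = ∑ s ∈ T, ∏ i, ∑ t ∈ P i, c i t * unitInd (s i) t := by
      rw [sum_comm]
      simp_rw [indicator_cube_eq_prod_unitInd, ← prod_mul_distrib, prod_univ_sum]

theorem sum_prod_jumpWeight_eq_zero (htile : ∀ x ∈ cube 0, ∃! s, s ∈ T ∧ x ∈ cube s)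
    (hT : ∀ s ∈ T, ∀ i, -1 < s i) {y : Fin d → ℝ} (hy : ∀ i, 0 < y i ∧ y i ≤ 1)
    (hy₁ : ∃ i, y i ≠ 1) :
    ∑ s ∈ T, ∏ i, jumpWeight (y i) (s i) = 0 := by
  classical
  choose p hp₀ hpy hgap using fun i =>
    exists_Ico_forall_notMem_Ioo (T.image fun s => cutPoint (s i)) (hy i).1
  let P : Fin d → Finset ℝ := fun i => if y i = 1 then {0} else {p i, y i}
  let c : Fin d → ℝ → ℝ := fun i t => if t = y i then -1 else 1
  have hP : ∀ i, ∀ t ∈ P i, 0 ≤ t ∧ t < 1 := by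
    intro i t ht
    by_cases hi : y i = 1
    · simp only [P, if_pos hi, mem_singleton] at ht
      simp [ht]
    · have hyi := lt_of_le_of_ne (hy i).2 hi
      simp only [P, if_neg hi, mem_insert, mem_singleton] at ht
      rcases ht with rfl | rfl <;> constructor <;> linarith [hp₀ i, hpy i]
  have hfactor : ∀ s ∈ T, ∀ i, ∑ t ∈ P i, c i t * unitInd (s i) t = jumpWeight (y i) (s i) := by
    intro s hs i
    by_cases hi : y i = 1
    · simp [P, c, hi, jumpWeight, unitInd_zero (hT s hs i)]
    · have hne : p i ≠ y i := (hpy i).ne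
      simp only [P, c, if_neg hi, jumpWeight, sum_pair hne, if_neg hne, if_true]
      rw [← unitInd_sub_unitInd (hp₀ i) (hpy i) (lt_of_le_of_ne (hy i).2 hi)
        (hgap i _ (mem_image_of_mem _ hs))]
      ring
  have hzero : ∏ i, ∑ t ∈ P i, c i t = 0 := by
    obtain ⟨i, hi⟩ := hy₁
    refine prod_eq_zero (mem_univ i) ?_
    simp [P, c, hi, sum_pair (hpy i).ne, (hpy i).ne]
  rw [← sum_congr rfl fun s hs => prod_congr rfl fun i _ => hfactor s hs i,
    ← prod_sum_eq_sum_prod_sum_unitInd htile P hP c, hzero]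

lemma prod_jumpWeight_eq {s₀ s : Fin d → ℝ} (hs₀ : s₀ ≠ 0) (hs₀₁ : ∀ i, s₀ i < 1)
    (hs₁ : ∀ i, s i < 1) (hmin : s ≠ 0 → #{i | s₀ i = 0} ≤ #{i | s i = 0}) :
    ∏ i, jumpWeight (cutPoint (s₀ i)) (s i) =
      if cutPoint ∘ s = cutPoint ∘ s₀ then ∏ i, jumpSign (s i) else 0 := by
  have hone : ∀ i, cutPoint (s₀ i) = 1 ↔ s₀ i = 0 := fun i => cutPoint_eq_one_iff (hs₀₁ i)
  split_ifs with h
  · refine prod_congr rfl fun i _ => ?_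
    have hi : cutPoint (s i) = cutPoint (s₀ i) := congrFun h i
    by_cases h₁ : cutPoint (s₀ i) = 1
    · have : s i = 0 := (cutPoint_eq_one_iff (hs₁ i)).1 (hi.trans h₁)
      simp [jumpWeight, h₁, this, jumpSign]
    · simp [jumpWeight, h₁, hi]
  · -- A nonzero product puts the zeros of `s` among those of `s₀`; minimality makes them equal.
    by_contra hne
    have hw : ∀ i, jumpWeight (cutPoint (s₀ i)) (s i) ≠ 0 := fun i =>
      prod_ne_zero_iff.1 hne i (mem_univ i)
    have hoff : ∀ i, s₀ i ≠ 0 → cutPoint (s i) = cutPoint (s₀ i) := by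
      intro i hi
      simpa [jumpWeight, (hone i).not.2 hi, jumpSign_ne_zero] using hw i
    have hsub : ({i | s i = 0} : Finset (Fin d)) ⊆ ({i | s₀ i = 0} : Finset (Fin d)) := by
      intro i
      simp only [mem_filter, mem_univ, true_and]
      intro hsi
      by_contra hi
      have := hoff i hi
      rw [hsi, show cutPoint 0 = 1 by norm_num [cutPoint], eq_comm, hone] at this
      exact hi this
    have hs : s ≠ 0 := by
      obtain ⟨j, hj⟩ := Function.ne_iff.1 hs₀
      intro hs
      exact hj (by simpa using hsub (by simp [hs] : j ∈ ({i | s i = 0} : Finset (Fin d))))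
    have heq := eq_of_subset_of_card_le hsub (hmin hs)
    refine h (funext fun i => ?_)
    by_cases hi : s₀ i = 0
    · have hsi : i ∈ ({i | s i = 0} : Finset (Fin d)) := by rw [heq]; simpa using hi
      simp only [Function.comp_apply, hi, (by simpa using hsi : s i = 0)]
    · exact hoff i hi

theorem eq_zero_of_jumpSign_eq (htile : ∀ x ∈ cube 0, ∃! s, s ∈ T ∧ x ∈ cube s)
    (hT : ∀ s ∈ T, ∀ i, -1 < s i ∧ s i < 1)
    (hsign : ∀ s ∈ T, ∀ s' ∈ T, cutPoint ∘ s = cutPoint ∘ s' →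
      ∏ i, jumpSign (s i) = ∏ i, jumpSign (s' i)) :
    ∀ s ∈ T, s = 0 := by
  by_contra! ⟨s₁, hs₁, hne⟩
  obtain ⟨s₀, hs₀, hmin⟩ := (T.filter (· ≠ 0)).exists_min_image (fun s => #{i | s i = 0})
    ⟨s₁, mem_filter.2 ⟨hs₁, hne⟩⟩
  obtain ⟨hs₀T, hs₀⟩ := mem_filter.1 hs₀
  have hy₁ : ∃ i, cutPoint (s₀ i) ≠ 1 := by
    obtain ⟨i, hi⟩ := Function.ne_iff.1 hs₀
    exact ⟨i, (cutPoint_eq_one_iff (hT s₀ hs₀T i).2).not.2 hi⟩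
  have hsum := sum_prod_jumpWeight_eq_zero htile (fun s hs i => (hT s hs i).1)
    (fun i => ⟨cutPoint_pos (hT s₀ hs₀T i).1, cutPoint_le_one (hT s₀ hs₀T i).2⟩) hy₁
  rw [sum_congr rfl fun s hs => prod_jumpWeight_eq hs₀ (hT s₀ hs₀T · |>.2) (hT s hs · |>.2)
      fun hs0 => hmin s (mem_filter.2 ⟨hs, hs0⟩), ← sum_filter,
    sum_congr rfl fun s hs => hsign s (mem_filter.1 hs).1 s₀ hs₀T (mem_filter.1 hs).2,
    sum_const, nsmul_eq_mul] at hsum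
  have hcard : #{s ∈ T | cutPoint ∘ s = cutPoint ∘ s₀} ≠ 0 :=
    card_ne_zero_of_mem (mem_filter.2 ⟨hs₀T, rfl⟩)
  exact mul_ne_zero (Nat.cast_ne_zero.2 hcard) (prod_ne_zero_iff.2 fun i _ => jumpSign_ne_zero _)
    hsum

lemma prod_jumpSign_eq_of_cutPoint_comp_eq {s s' : Fin d → ℝ} (h : cutPoint ∘ s = cutPoint ∘ s') :
    ∏ i, jumpSign (s i) = (-1) ^ #{i | |s i - s' i| = 1} * ∏ i, jumpSign (s' i) := by
  rw [prod_congr rfl fun i _ => jumpSign_eq_of_cutPoint_eq (congrFun h i), prod_mul_distrib,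
    prod_ite, prod_const, prod_const_one, mul_one]

lemma corner_mem_cube {s u : Fin d → ℝ} (h : (cube s ∩ cube u).Nonempty) :
    (fun i => if u i < s i then u i + 1 else u i) ∈ cube s := by
  obtain ⟨x, hxs, hxu⟩ := h
  intro i
  have := hxs i
  have := hxu i
  dsimp only
  split_ifs <;> constructor <;> linarith

theorem finite_setOf_inter_cube_nonempty {S : Set (Fin d → ℝ)} (hpack : S.PairwiseDisjoint cube)
    (u : Fin d → ℝ) : {s ∈ S | (cube s ∩ cube u).Nonempty}.Finite := by
  refine Set.Finite.of_finite_image (f := fun s i => u i < s i) (Set.toFinite _) ?_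
  intro s hs s' hs' hss'
  have hcorner : (fun i => if u i < s i then u i + 1 else u i) =
      fun i => if u i < s' i then u i + 1 else u i := by
    funext i
    simp only [show (u i < s i) = (u i < s' i) from congrFun hss' i]
  exact hpack.elim_set hs.1 hs'.1 _ (corner_mem_cube hs.2) (hcorner ▸ corner_mem_cube hs'.2)

lemma mem_cube_sub {s v x : Fin d → ℝ} : x ∈ cube (s - v) ↔ x + v ∈ cube s := by
  refine forall_congr' fun i => ?_
  simp only [Pi.sub_apply, Pi.add_apply]
  constructor <;> rintro ⟨h₁, h₂⟩ <;> constructor <;> linarith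

theorem exists_odd_of_zero_notMem {S : Set (Fin d → ℝ)} (hpack : S.PairwiseDisjoint cube)
    (h0 : 0 ∉ S) (hcover : cube 0 ⊆ ⋃ s ∈ S, cube s) :
    ∃ t ∈ S, ∃ t' ∈ S, (∀ i, t i - t' i ∈ ({-1, 0, 1} : Set ℝ)) ∧
      Odd #{i | |t i - t' i| = 1} := by
  by_contra! heven
  have hfin := finite_setOf_inter_cube_nonempty hpack 0
  set T := hfin.toFinset
  have hmemT : ∀ {s}, s ∈ T ↔ s ∈ S ∧ (cube s ∩ cube 0).Nonempty := by
    intro s; simp [T]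
  have hT : ∀ s ∈ T, ∀ i, -1 < s i ∧ s i < 1 := by
    intro s hs i
    obtain ⟨-, x, hxs, hx0⟩ := hmemT.1 hs
    have := hxs i
    have := hx0 i
    simp only [Pi.zero_apply, zero_add] at this
    constructor <;> linarith
  have htile : ∀ x ∈ cube 0, ∃! s, s ∈ T ∧ x ∈ cube s := by
    intro x hx
    obtain ⟨s, hs, hxs⟩ := Set.mem_iUnion₂.1 (hcover hx)
    exact ⟨s, ⟨hmemT.2 ⟨hs, x, hxs, hx⟩, hxs⟩, fun s' ⟨hs', hxs'⟩ =>
      hpack.elim_set (hmemT.1 hs').1 hs x hxs' hxs⟩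
  have hsign : ∀ s ∈ T, ∀ s' ∈ T, cutPoint ∘ s = cutPoint ∘ s' →
      ∏ i, jumpSign (s i) = ∏ i, jumpSign (s' i) := by
    intro s hs s' hs' h
    have hdiff : ∀ i, s i - s' i ∈ ({-1, 0, 1} : Set ℝ) := fun i =>
      sub_mem_of_cutPoint_eq (congrFun h i)
    rw [prod_jumpSign_eq_of_cutPoint_comp_eq h,
      (Nat.not_odd_iff_even.1 (heven s (hmemT.1 hs).1 s' (hmemT.1 hs').1 hdiff)).neg_one_pow,
      one_mul]
  obtain ⟨s, ⟨hs, -⟩, -⟩ := htile 0 fun i => by simp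
  exact h0 (eq_zero_of_jumpSign_eq htile hT hsign s hs ▸ (hmemT.1 hs).1)

end CubePacking

open CubePacking in
theorem stmt_4 {d : ℕ} (S : Set (Fin d → ℝ))
    (hpack : ∀ s ∈ S, ∀ s' ∈ S, s ≠ s' → Disjoint (cube s) (cube s'))
    (u : Fin d → ℝ) (hu : u ∉ S)
    (hcover : cube u ⊆ ⋃ s ∈ S, cube s) :
    ∃ t ∈ S, ∃ t' ∈ S, (∀ i, t i - t' i ∈ ({-1, 0, 1} : Set ℝ)) ∧
      Odd (Finset.univ.filter (fun i => |t i - t' i| = 1)).card := by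
  have hpack' : ((· - u) '' S).PairwiseDisjoint cube := by
    rintro _ ⟨s, hs, rfl⟩ _ ⟨s', hs', rfl⟩ hne
    refine Set.disjoint_left.2 fun x hx hx' => ?_
    exact Set.disjoint_left.1 (hpack s hs s' hs' (by rintro rfl; exact hne rfl))
      (mem_cube_sub.1 hx) (mem_cube_sub.1 hx')
  have h0 : (0 : Fin d → ℝ) ∉ (· - u) '' S := by
    rintro ⟨s, hs, h⟩
    exact hu (sub_eq_zero.1 h ▸ hs)
  have hcover' : cube 0 ⊆ ⋃ s ∈ (· - u) '' S, cube s := by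
    intro x hx
    obtain ⟨s, hs, hxs⟩ := Set.mem_iUnion₂.1 (hcover (mem_cube_sub.1 (by rwa [sub_self])))
    exact Set.mem_biUnion (Set.mem_image_of_mem _ hs) (mem_cube_sub.2 hxs)
  obtain ⟨_, ⟨t, ht, rfl⟩, _, ⟨t', ht', rfl⟩, hdiff, hodd⟩ :=
    exists_odd_of_zero_notMem hpack' h0 hcover'
  simp only [Pi.sub_apply, sub_sub_sub_cancel_right] at hdiff hodd
  exact ⟨t, ht, t', ht', hdiff, hodd⟩
end

section
/- Let I + S be a packing of ℝ^d by unit cubes with I + u ⊆ ⋃(I + S) and u ∉ S. Let S' = {s ∈ S : (I + s) ∩ (I + u) ≠ ∅} and for s ∈ S' let ⟨s⟩ = {i ∈ [d] : s_i ≠ u_i}. Then for every t ∈ S' such that ⟨t⟩ is maximal under inclusion among {⟨s⟩ : s ∈ S'}, there exists t' ∈ S' with ⟨t'⟩ = ⟨t⟩, t - t' ∈ {-1,0,1}^d, and |{i : |t_i - t'_i| = 1}| odd. -/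
/-!
Fix a small `δ > 0`. In every coordinate `i ∈ T = ⟨t⟩` the face of `I + t` that lies inside
`I + u` carries two probe values at distance `δ`, one inside `I + t` and one just outside; the
`2^|T|` probe points, indexed by `K ⊆ T` (the coordinates using the outer probe), all lie in
`I + u` and are therefore covered by `I + S`. Weight the probe point `K` by `(-1)^|K|`: the weights
add up to `0`; a cube containing both probes of some coordinate covers a set of probe points that
is invariant under switching that coordinate, so it collects total weight `0`; and `I + t`
collects the point `∅`. Hence some cube separating every probe pair covers a point with `|K|`
odd. Maximality of `⟨t⟩` makes it agree with `u` off `T`, so it lies within `δ` of the vector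
`t'` obtained from `t` by a unit step away from `u` in the coordinates of `K`. As there are
finitely many `K`, one of them works for arbitrarily small `δ`; since two cubes of a packing whose
corners are closer than `1` in every coordinate coincide, this forces `t' ∈ S`.
-/

open Set Filter Topology
open scoped Finset

namespace Finset

variable {ι : Type*} [DecidableEq ι]

theorem neg_one_pow_card_symmDiff_singleton (K : Finset ι) (i : ι) :
    (-1 : ℤ) ^ #(symmDiff K {i}) = -(-1) ^ #K := by
  by_cases h : i ∈ K
  · have hK : symmDiff K {i} = K.erase i := by
      ext j; by_cases j = i <;> simp_all [Finset.mem_symmDiff]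
    rw [hK, ← card_erase_add_one h, pow_succ]; ring
  · have hK : symmDiff K {i} = insert i K := by
      ext j; by_cases j = i <;> simp_all [Finset.mem_symmDiff]
    rw [hK, card_insert_of_notMem h, pow_succ]; ring

theorem exists_odd_card_of_flip_invariant {α : Type*} {T : Finset ι} (hT : T.Nonempty)
    {σ : Finset ι → α} {P : α → Prop} (h₀ : P (σ ∅))
    (hflip : ∀ a, ¬ P a → ∃ i ∈ T, ∀ K ⊆ T, σ K = a → σ (symmDiff K {i}) = a) :
    ∃ K ⊆ T, Odd #K ∧ P (σ K) := by
  classical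
  by_contra! hodd
  have : Nonempty ι := hT.to_subtype.map Subtype.val
  choose! flip hflipT hflip using hflip
  have hzero : ∑ K ∈ T.powerset with ¬ P (σ K), (-1 : ℤ) ^ #K = 0 := by
    refine sum_involution (fun K _ => symmDiff K {flip (σ K)}) ?_ ?_ ?_ ?_
    · intro K _
      rw [neg_one_pow_card_symmDiff_singleton]; ring
    · intro K _ _ hK
      simp [symmDiff_eq_left] at hK
    · intro K hK
      simp only [mem_filter, Finset.mem_powerset] at hK ⊢
      rw [hflip _ hK.2 K hK.1 rfl]
      exact ⟨symmDiff_le_sup.trans (union_subset hK.1 (singleton_subset_iff.2 (hflipT _ hK.2))),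
        hK.2⟩
    · intro K hK
      simp only [mem_filter, Finset.mem_powerset] at hK
      rw [hflip _ hK.2 K hK.1 rfl, symmDiff_symmDiff_cancel_right]
  have hpos : 0 < ∑ K ∈ T.powerset with P (σ K), (-1 : ℤ) ^ #K := by
    refine sum_pos' (fun K hK => ?_) ⟨∅, by simp [h₀], by simp⟩
    simp only [mem_filter, Finset.mem_powerset] at hK
    rw [(Nat.not_odd_iff_even.1 fun h => hodd K hK.1 h hK.2).neg_one_pow]
    exact zero_le_one
  have := sum_filter_add_sum_filter_not T.powerset (fun K => P (σ K)) (fun K => (-1 : ℤ) ^ #K)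
  rw [sum_powerset_neg_one_pow_card_of_nonempty hT, hzero] at this
  omega

end Finset

theorem exists_forall_pos_of_eventually_exists {ι : Type*} [Finite ι] {Q : ι → ℝ → Prop}
    (hQ : ∀ K, Monotone (Q K)) (h : ∀ᶠ δ in 𝓝[>] 0, ∃ K, Q K δ) : ∃ K, ∀ δ > 0, Q K δ := by
  by_contra! hne
  have hnot : ∀ᶠ δ in 𝓝[>] 0, ∀ K, ¬ Q K δ := eventually_all.2 fun K => by
    obtain ⟨δK, hδK, hK⟩ := hne K
    filter_upwards [Ioo_mem_nhdsGT hδK] with δ hδ hQδ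
    exact hK (hQ K hδ.2.le hQδ)
  obtain ⟨δ, ⟨K, hK⟩, hnotδ⟩ := (h.and hnot).exists
  exact hnotδ K hK

/-- The two probes at distance `δ` around the face of `[t, t + 1)` that lies in `(u, u + 1)`
(when `t ≠ u`): `probe t u δ false` is inside `[t, t + 1)`, `probe t u δ true` is outside. -/
noncomputable def probe (t u δ : ℝ) (b : Bool) : ℝ :=
  if u < t then (if b then t - δ else t) else (if b then t + 1 else t + 1 - δ)

noncomputable def partner (t u : ℝ) (b : Bool) : ℝ :=
  if b then (if u < t then t - 1 else t + 1) else t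

section Probe

variable {t u δ : ℝ}

theorem probe_false_mem_Ico (hδ₀ : 0 < δ) (hδ₁ : δ ≤ 1) :
    probe t u δ false ∈ Ico t (t + 1) := by
  simp only [probe, Bool.false_eq_true, if_false]
  split_ifs <;> constructor <;> linarith

theorem probe_true_notMem_Ico (hδ₀ : 0 < δ) : probe t u δ true ∉ Ico t (t + 1) := by
  simp only [probe, if_true, mem_Ico, not_and, not_lt]
  split_ifs <;> intros <;> linarith

theorem eventually_probe_mem_Ico (hne : t ≠ u) (hlt : |t - u| < 1) :
    ∀ᶠ δ in 𝓝[>] 0, ∀ b, probe t u δ b ∈ Ico u (u + 1) := by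
  rw [abs_lt] at hlt
  unfold probe
  by_cases h : u < t
  · filter_upwards [Ioo_mem_nhdsGT (sub_pos.2 h)] with δ ⟨hδ₀, hδ⟩ b
    cases b <;> simp only [if_pos h] <;> constructor <;> simp <;> linarith
  · have h' : t < u := lt_of_le_of_ne (not_lt.1 h) hne
    filter_upwards [Ioo_mem_nhdsGT (show 0 < t + 1 - u by linarith)] with δ ⟨hδ₀, hδ⟩ b
    cases b <;> simp only [if_neg h] <;> constructor <;> simp <;> linarith

theorem mem_Ioc_partner {s : ℝ} {b : Bool} (hδ : 0 ≤ δ) (hin : probe t u δ b ∈ Ico s (s + 1))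
    (hout : probe t u δ (!b) ∉ Ico s (s + 1)) :
    s ∈ Ioc (partner t u b - δ) (partner t u b) := by
  simp only [mem_Ico, not_and, not_lt, mem_Ioc] at hin hout ⊢
  cases b <;>
  simp only [probe, partner, Bool.not_false, Bool.not_true, Bool.false_eq_true, if_true, if_false]
    at hin hout ⊢ <;>
  split_ifs at hin hout ⊢ <;>
  constructor <;> first | linarith | (by_contra! h; linarith [hout (by linarith)])

theorem sub_partner_mem (t u : ℝ) (b : Bool) : t - partner t u b ∈ ({-1, 0, 1} : Set ℝ) := by
  unfold partner; split_ifs <;> simp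

theorem abs_sub_partner_eq_one_iff (t u : ℝ) (b : Bool) :
    |t - partner t u b| = 1 ↔ b = true := by
  unfold partner; split_ifs <;> simp_all

end Probe

section Cubes

variable {d : ℕ}

theorem cube_inter_nonempty_iff {a b : Fin d → ℝ} :
    (cube a ∩ cube b).Nonempty ↔ ∀ i, |a i - b i| < 1 := by
  constructor
  · rintro ⟨x, hxa, hxb⟩ i
    rw [abs_lt]
    constructor <;> linarith [hxa i, hxb i]
  · intro h
    refine ⟨fun i => max (a i) (b i), fun i => ⟨le_max_left _ _, ?_⟩,
      fun i => ⟨le_max_right _ _, ?_⟩⟩ <;>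
    · have := abs_lt.1 (h i)
      exact max_lt (by linarith) (by linarith)

theorem eq_of_forall_abs_sub_lt_one {S : Set (Fin d → ℝ)} (hS : S.PairwiseDisjoint cube)
    {s s' : Fin d → ℝ} (hs : s ∈ S) (hs' : s' ∈ S) (h : ∀ i, |s i - s' i| < 1) : s = s' :=
  hS.elim hs hs' (not_disjoint_iff_nonempty_inter.2 (cube_inter_nonempty_iff.2 h))

theorem mem_of_forall_pos_exists_mem_Ioc {S A : Set (Fin d → ℝ)} (hS : S.PairwiseDisjoint cube)
    (hA : A ⊆ S) {p : Fin d → ℝ} (h : ∀ δ > 0, ∃ s ∈ A, ∀ i, s i ∈ Ioc (p i - δ) (p i)) :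
    p ∈ A := by
  obtain ⟨s₀, hs₀A, hs₀⟩ := h 1 one_pos
  suffices s₀ = p from this ▸ hs₀A
  funext i
  refine le_antisymm (hs₀ i).2 (not_lt.1 fun hlt => ?_)
  obtain ⟨s, hsA, hs⟩ := h (p i - s₀ i) (sub_pos.2 hlt)
  have hss₀ : s = s₀ := eq_of_forall_abs_sub_lt_one hS (hA hsA) (hA hs₀A) fun j => by
    rw [abs_lt]
    constructor <;> linarith [(hs j).1, (hs j).2, (hs₀ j).1, (hs₀ j).2, (hs₀ i).1]
  linarith [hss₀ ▸ (hs i).1]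

end Cubes

noncomputable def probePoint {d : ℕ} (t u : Fin d → ℝ) (δ : ℝ) (K : Finset (Fin d)) :
    Fin d → ℝ :=
  fun i => probe (t i) (u i) δ (i ∈ K)

noncomputable def partnerPoint {d : ℕ} (t u : Fin d → ℝ) (K : Finset (Fin d)) : Fin d → ℝ :=
  fun i => partner (t i) (u i) (i ∈ K)

section Packing

variable {d : ℕ} {S : Set (Fin d → ℝ)} {t u : Fin d → ℝ} {T : Finset (Fin d)} {δ : ℝ}

theorem exists_odd_card_separating_cube (hS : S.PairwiseDisjoint cube)
    (hcover : cube u ⊆ ⋃ s ∈ S, cube s) (ht : t ∈ S) (hTne : T.Nonempty)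
    (hδ₀ : 0 < δ) (hδ₁ : δ ≤ 1) (hcube : ∀ K ⊆ T, probePoint t u δ K ∈ cube u) :
    ∃ K ⊆ T, Odd #K ∧ ∃ s ∈ S, probePoint t u δ K ∈ cube s ∧
      ∀ i ∈ T, ¬ ∀ b, probe (t i) (u i) δ b ∈ Ico (s i) (s i + 1) := by
  classical
  choose! σ hσS hσ using fun K (hK : K ⊆ T) => by simpa using hcover (hcube K hK)
  have hσ_eq : ∀ K ⊆ T, ∀ s ∈ S, probePoint t u δ K ∈ cube s → σ K = s :=
    fun K hK s hs hKs => hS.elim_set (hσS K hK) hs _ (hσ K hK) hKs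
  have hσ₀ : σ ∅ = t := hσ_eq ∅ (Finset.empty_subset T) t ht fun i => by
    simpa [probePoint] using probe_false_mem_Ico hδ₀ hδ₁
  obtain ⟨K, hKT, hKodd, hK⟩ := Finset.exists_odd_card_of_flip_invariant hTne (σ := σ)
    (P := fun s : Fin d → ℝ => ∀ i ∈ T, ¬ ∀ b, probe (t i) (u i) δ b ∈ Ico (s i) (s i + 1))
    (by rw [hσ₀]; exact fun i _ hall => probe_true_notMem_Ico hδ₀ (hall true)) fun s hs => by
      push Not at hs
      obtain ⟨i, hiT, hi⟩ := hs
      refine ⟨i, hiT, fun K hKT hKs => ?_⟩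
      have hKiT : symmDiff K {i} ⊆ T :=
        symmDiff_le_sup.trans (Finset.union_subset hKT (Finset.singleton_subset_iff.2 hiT))
      refine hσ_eq _ hKiT s (hKs ▸ hσS K hKT) fun j => ?_
      by_cases hji : j = i
      · subst hji
        exact hi _
      · simpa [probePoint, Finset.mem_symmDiff, hji] using hKs ▸ hσ K hKT j
  exact ⟨K, hKT, hKodd, σ K, hσS K hKT, hσ K hKT, hK⟩

theorem exists_odd_card_near_partnerPoint (hS : S.PairwiseDisjoint cube)
    (hcover : cube u ⊆ ⋃ s ∈ S, cube s) (ht : t ∈ S) (hT : ∀ i, i ∈ T ↔ t i ≠ u i)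
    (hTne : T.Nonempty)
    (hmax : ∀ s ∈ S, (cube s ∩ cube u).Nonempty → (∀ i ∈ T, s i ≠ u i) → ∀ i ∉ T, s i = u i)
    (hδ₀ : 0 < δ) (hδ₁ : δ ≤ 1)
    (hprobe : ∀ i ∈ T, ∀ b, probe (t i) (u i) δ b ∈ Ico (u i) (u i + 1)) :
    ∃ K, Odd #K ∧ ∃ s ∈ {s ∈ S | (cube s ∩ cube u).Nonempty ∧ ∀ i, s i ≠ u i ↔ i ∈ T},
      ∀ i, s i ∈ Ioc (partnerPoint t u K i - δ) (partnerPoint t u K i) := by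
  have hcube : ∀ K ⊆ T, probePoint t u δ K ∈ cube u := fun K hK i => by
    by_cases hi : i ∈ T
    · exact hprobe i hi _
    · have htu : t i = u i := by simpa [hT] using hi
      show probe (t i) (u i) δ (i ∈ K) ∈ Ico (u i) (u i + 1)
      rw [decide_eq_false fun h => hi (hK h), ← htu]
      exact probe_false_mem_Ico hδ₀ hδ₁
  obtain ⟨K, hKT, hKodd, s, hs, hKs, hsep⟩ :=
    exists_odd_card_separating_cube hS hcover ht hTne hδ₀ hδ₁ hcube
  have hsT : ∀ i ∈ T, s i ≠ u i := fun i hi hsu => hsep i hi (hsu ▸ hprobe i hi)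
  have hsu : (cube s ∩ cube u).Nonempty := ⟨_, hKs, hcube K hKT⟩
  have hsT' := hmax s hs hsu hsT
  refine ⟨K, hKodd, s, ⟨hs, hsu, fun i => ⟨fun h => by_contra (h ∘ hsT' i), hsT i⟩⟩,
    fun i => ?_⟩
  by_cases hi : i ∈ T
  · refine mem_Ioc_partner hδ₀.le (hKs i) fun hout => hsep i hi fun b => ?_
    rcases Bool.eq_or_eq_not b (i ∈ K) with rfl | rfl
    exacts [hKs i, hout]
  · have hiK : i ∉ K := fun h => hi (hKT h)
    have htu : t i = u i := by simpa [hT] using hi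
    simp [partnerPoint, partner, hiK, hsT' i hi, htu, hδ₀]

theorem exists_odd_card_partnerPoint_mem (hS : S.PairwiseDisjoint cube)
    (hcover : cube u ⊆ ⋃ s ∈ S, cube s) (ht : t ∈ S) (htu : (cube t ∩ cube u).Nonempty)
    (hT : ∀ i, i ∈ T ↔ t i ≠ u i) (hTne : T.Nonempty)
    (hmax : ∀ s ∈ S, (cube s ∩ cube u).Nonempty → (∀ i ∈ T, s i ≠ u i) → ∀ i ∉ T, s i = u i) :
    ∃ K, Odd #K ∧
      partnerPoint t u K ∈ {s ∈ S | (cube s ∩ cube u).Nonempty ∧ ∀ i, s i ≠ u i ↔ i ∈ T} := by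
  have hclose := cube_inter_nonempty_iff.1 htu
  have hnear : ∀ᶠ δ in 𝓝[>] 0, ∃ K, Odd #K ∧
      ∃ s ∈ {s ∈ S | (cube s ∩ cube u).Nonempty ∧ ∀ i, s i ≠ u i ↔ i ∈ T},
        ∀ i, s i ∈ Ioc (partnerPoint t u K i - δ) (partnerPoint t u K i) := by
    filter_upwards [(eventually_all_finset T).2 fun i hi =>
        eventually_probe_mem_Ico ((hT i).1 hi) (hclose i), Ioc_mem_nhdsGT one_pos]
      with δ hprobe ⟨hδ₀, hδ₁⟩
    exact exists_odd_card_near_partnerPoint hS hcover ht hT hTne hmax hδ₀ hδ₁ hprobe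
  obtain ⟨K, hK⟩ := exists_forall_pos_of_eventually_exists
    (fun K δ δ' hδ ⟨hKodd, s, hs, hnear⟩ =>
      ⟨hKodd, s, hs, fun i => Ioc_subset_Ioc_left (by linarith) (hnear i)⟩) hnear
  exact ⟨K, (hK 1 one_pos).1,
    mem_of_forall_pos_exists_mem_Ioc hS (fun s hs => hs.1) fun δ hδ => (hK δ hδ).2⟩

end Packing

theorem stmt_5 {d : ℕ} (S : Set (Fin d → ℝ))
    (hpack : ∀ s ∈ S, ∀ s' ∈ S, s ≠ s' → Disjoint (cube s) (cube s'))
    (u : Fin d → ℝ) (hu : u ∉ S)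
    (hcover : cube u ⊆ ⋃ s ∈ S, cube s)
    (S' : Set (Fin d → ℝ)) (hS' : S' = {s ∈ S | (cube s ∩ cube u).Nonempty})
    (supp : (Fin d → ℝ) → Finset (Fin d))
    (hsupp : ∀ s, supp s = Finset.univ.filter (fun i => s i ≠ u i))
    (t : Fin d → ℝ) (ht : t ∈ S')
    (hmax : ∀ s ∈ S', supp t ⊆ supp s → supp s = supp t) :
    ∃ t' ∈ S', supp t' = supp t ∧ (∀ i, t i - t' i ∈ ({-1, 0, 1} : Set ℝ)) ∧
      Odd (Finset.univ.filter (fun i => |t i - t' i| = 1)).card := by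
  subst hS'
  obtain ⟨htS, htu⟩ := ht
  have hmem_supp : ∀ s i, i ∈ supp s ↔ s i ≠ u i := fun s i => by simp [hsupp]
  have hTne : (supp t).Nonempty := by
    obtain ⟨i, hi⟩ := Function.ne_iff.1 (ne_of_mem_of_not_mem htS hu)
    exact ⟨i, (hmem_supp t i).2 hi⟩
  have hmax' : ∀ s ∈ S, (cube s ∩ cube u).Nonempty → (∀ i ∈ supp t, s i ≠ u i) →
      ∀ i ∉ supp t, s i = u i := fun s hs hsu hsT i hi => by
    by_contra hne
    rw [← hmax s ⟨hs, hsu⟩ fun j hj => (hmem_supp s j).2 (hsT j hj)] at hi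
    exact hi ((hmem_supp s i).2 hne)
  obtain ⟨K, hKodd, ht'S, ht'u, ht'T⟩ :=
    exists_odd_card_partnerPoint_mem hpack hcover htS htu (hmem_supp t) hTne hmax'
  refine ⟨partnerPoint t u K, ⟨ht'S, ht'u⟩, ?_, fun i => sub_partner_mem _ _ _, ?_⟩
  · ext i
    rw [hmem_supp, ht'T]
  · convert hKodd
    ext i
    simp [partnerPoint, abs_sub_partner_eq_one_iff]
end

section
/- If I + S is a packing of ℝ^d by unit cubes, then there is a partition of S into sets S^0 and S^1 such that both F^0 = ⋃_{s ∈ S^0}(I + s) and F^1 = ⋃_{s ∈ S^1}(I + s) are rough: for each i ∈ {0,1} and each u ∈ ℝ^d, if I + u ⊆ F^i then u ∈ S^i. -/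
private lemma coord_parity (u s q : ℝ) (h1 : u - 1 < s) (h2 : s < u + 1)
    (hq1 : u < q) (hq2 : q < ⌊u⌋ + 1)
    (hc1 : s < ⌊u⌋ + 1 → s < q) (hc2 : s + 1 < ⌊u⌋ + 1 → s + 1 < q) :
    Even (⌊s⌋ - ⌊u⌋ - (if s ≤ q ∧ q < s + 1 then (0:ℤ) else 1)) := by
  have hfu : (⌊u⌋ : ℝ) ≤ u := Int.floor_le u
  have hfu2 : u < ⌊u⌋ + 1 := Int.lt_floor_add_one u
  rcases le_or_gt s u with hsu | hsu
  · rcases le_or_gt ((⌊u⌋ : ℝ)) s with hks | hks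
    · have hfl : ⌊s⌋ = ⌊u⌋ := le_antisymm (Int.floor_le_floor hsu) (Int.le_floor.2 hks)
      have hcond : s ≤ q ∧ q < s + 1 := ⟨by linarith, by linarith⟩
      rw [if_pos hcond, hfl]
      simp
    · have hq3 : s + 1 < q := hc2 (by linarith)
      have hcond : ¬ (s ≤ q ∧ q < s + 1) := fun h => by linarith [h.2]
      have hfl : ⌊s⌋ = ⌊u⌋ - 1 := by
        have hle : ⌊u⌋ - 1 ≤ ⌊s⌋ := Int.le_floor.2 (by push_cast [Int.cast_sub]; linarith)
        have hlt : ⌊s⌋ < ⌊u⌋ := Int.floor_lt.2 (by linarith)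
        omega
      rw [if_neg hcond, hfl]
      exact ⟨-1, by ring⟩
  · rcases lt_or_ge s ((⌊u⌋ : ℝ) + 1) with hks | hks
    · have hfl : ⌊s⌋ = ⌊u⌋ := by
        have hle : ⌊u⌋ ≤ ⌊s⌋ := Int.le_floor.2 (by linarith)
        have hlt : ⌊s⌋ < ⌊u⌋ + 1 := Int.floor_lt.2 (by push_cast; linarith)
        omega
      have hge : (⌊u⌋ : ℝ) ≤ s := by
        have := Int.floor_le s; rw [hfl] at this; exact this
      have hcond : s ≤ q ∧ q < s + 1 := ⟨(hc1 hks).le, by linarith⟩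
      rw [if_pos hcond, hfl]
      simp
    · have hfl : ⌊s⌋ = ⌊u⌋ + 1 := by
        have hle : ⌊u⌋ + 1 ≤ ⌊s⌋ := Int.le_floor.2 (by push_cast; linarith)
        have hlt : ⌊s⌋ < ⌊u⌋ + 2 := Int.floor_lt.2 (by push_cast; linarith)
        omega
      have hcond : ¬ (s ≤ q ∧ q < s + 1) := fun h => by linarith [h.1]
      rw [if_neg hcond, hfl]
      simp

private lemma rough_main {d : ℕ} (S : Set (Fin d → ℝ))
    (hpack : ∀ s ∈ S, ∀ s' ∈ S, s ≠ s' → Disjoint (cube s) (cube s'))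
    (S' : Set (Fin d → ℝ)) (hsub : S' ⊆ S)
    (hmono : ∀ s ∈ S', ∀ t ∈ S', (Even (∑ i, ⌊s i⌋) ↔ Even (∑ i, ⌊t i⌋)))
    (u : Fin d → ℝ) (hcov : cube u ⊆ ⋃ s ∈ S', cube s) : u ∈ S' := by
  classical
  set T : Set (Fin d → ℝ) := {s | s ∈ S' ∧ (cube s ∩ cube u).Nonempty} with hTdef
  have hTsub : T ⊆ S' := fun s hs => hs.1
  have hball : ∀ s ∈ T, ∀ i, u i - 1 < s i ∧ s i < u i + 1 := by
    rintro s ⟨-, x, hxs, hxu⟩ i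
    have h1 := hxs i; have h2 := hxu i
    constructor <;> [linarith [h1.2, h2.1]; linarith [h1.1, h2.2]]
  have huniq : ∀ s ∈ T, ∀ t ∈ T, ∀ x, x ∈ cube s → x ∈ cube t → s = t := by
    intro s hs t ht x hxs hxt
    by_contra hne
    exact Set.disjoint_left.mp (hpack s (hsub hs.1) t (hsub ht.1) hne) hxs hxt
  have hex : ∀ x, x ∈ cube u → ∃ s, s ∈ T ∧ x ∈ cube s := by
    intro x hx
    obtain ⟨s, hs, hxs⟩ := Set.mem_iUnion₂.mp (hcov hx)
    exact ⟨s, ⟨hs, x, hxs, hx⟩, hxs⟩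
  -- T is finite
  have hfin : T.Finite := by
    have hinj : Set.InjOn (fun s (i : Fin d) => ⌊2 * s i⌋) T := by
      intro s hs t ht hst
      have hclose : ∀ i, t i < s i + 1 ∧ s i < t i + 1 := by
        intro i
        have h := congrFun hst i
        simp only at h
        have h1 : (⌊2 * s i⌋ : ℝ) ≤ 2 * s i := Int.floor_le _
        have h2 : 2 * s i < ⌊2 * s i⌋ + 1 := Int.lt_floor_add_one _
        have h3 : (⌊2 * t i⌋ : ℝ) ≤ 2 * t i := Int.floor_le _
        have h4 : 2 * t i < ⌊2 * t i⌋ + 1 := Int.lt_floor_add_one _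
        rw [h] at h1 h2
        constructor <;> linarith
      have hmem1 : (fun i => max (s i) (t i)) ∈ cube s := by
        intro i
        exact ⟨le_max_left _ _, max_lt (by linarith) (hclose i).1⟩
      have hmem2 : (fun i => max (s i) (t i)) ∈ cube t := by
        intro i
        exact ⟨le_max_right _ _, max_lt (hclose i).2 (by linarith)⟩
      exact huniq s hs t ht _ hmem1 hmem2
    have himg : ((fun s (i : Fin d) => ⌊2 * s i⌋) '' T).Finite := by
      apply Set.Finite.subset
        (Set.Finite.pi (fun i : Fin d => Set.finite_Icc (⌊2 * (u i - 1)⌋) (⌊2 * (u i + 1)⌋)))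
      rintro _ ⟨s, hs, rfl⟩
      rw [Set.mem_univ_pi]
      intro i
      have hb := hball s hs i
      exact ⟨Int.floor_le_floor (by linarith [hb.1]), Int.floor_le_floor (by linarith [hb.2])⟩
    exact Set.Finite.of_finite_image himg hinj
  -- choose the generic point q
  set m : Fin d → ℝ := fun i => (⌊u i⌋ : ℝ) + 1 with hm
  set V : Fin d → Set ℝ :=
    fun i => insert (u i) {c | (∃ s ∈ T, c = s i ∨ c = s i + 1) ∧ c < m i} with hV
  have hVfin : ∀ i, (V i).Finite := by
    intro i
    apply Set.Finite.insert
    apply Set.Finite.subset ((hfin.image (fun s => s i)).union (hfin.image (fun s => s i + 1)))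
    rintro c ⟨⟨s, hs, rfl | rfl⟩, -⟩
    · exact Or.inl ⟨s, hs, rfl⟩
    · exact Or.inr ⟨s, hs, rfl⟩
  have hVne : ∀ i, (V i).Nonempty := fun i => ⟨u i, Set.mem_insert _ _⟩
  have hVlt : ∀ i, ∀ c ∈ V i, c < m i := by
    rintro i c (rfl | ⟨-, h⟩)
    · exact Int.lt_floor_add_one _
    · exact h
  have hsup_mem : ∀ i, sSup (V i) ∈ V i := fun i => (hVne i).csSup_mem (hVfin i)
  set q : Fin d → ℝ := fun i => (sSup (V i) + m i) / 2 with hq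
  have hmi : ∀ i, m i = (⌊u i⌋ : ℝ) + 1 := fun i => rfl
  have hqi : ∀ i, q i = (sSup (V i) + m i) / 2 := fun i => rfl
  have hVmem0 : ∀ i, u i ∈ V i := fun i => Set.mem_insert _ _
  have hVmem1 : ∀ i, ∀ s ∈ T, s i < m i → s i ∈ V i := fun i s hs h =>
    Set.mem_insert_of_mem _ ⟨⟨s, hs, Or.inl rfl⟩, h⟩
  have hVmem2 : ∀ i, ∀ s ∈ T, s i + 1 < m i → s i + 1 ∈ V i := fun i s hs h =>
    Set.mem_insert_of_mem _ ⟨⟨s, hs, Or.inr rfl⟩, h⟩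
  clear_value q V m T
  have hsup_lt : ∀ i, sSup (V i) < q i := by
    intro i
    have h := hVlt i _ (hsup_mem i)
    rw [hqi i]
    linarith
  have hq_lt : ∀ i, q i < m i := by
    intro i
    have h := hVlt i _ (hsup_mem i)
    rw [hqi i, hmi i] at *
    linarith
  have hVq : ∀ i, ∀ c ∈ V i, c < q i := fun i c hc =>
    lt_of_le_of_lt (le_csSup (hVfin i).bddAbove hc) (hsup_lt i)
  have hq1 : ∀ i, u i < q i := fun i => hVq i (u i) (hVmem0 i)
  have hqu : q ∈ cube u := by
    intro i
    refine ⟨(hq1 i).le, lt_of_lt_of_le (hq_lt i) ?_⟩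
    rw [hmi i]
    linarith [Int.floor_le (u i)]
  -- bits
  set bit : (Fin d → ℝ) → Fin d → ℤ :=
    fun s i => if s i ≤ q i ∧ q i < s i + 1 then 0 else 1 with hbit
  have hbiti : ∀ s i, bit s i = if s i ≤ q i ∧ q i < s i + 1 then (0:ℤ) else 1 :=
    fun s i => rfl
  clear_value bit
  have hbit01 : ∀ s i, bit s i = 0 ∨ bit s i = 1 := by
    intro s i; rw [hbiti]; split <;> simp
  have hbit_cond : ∀ s i, bit s i = 0 → (s i ≤ q i ∧ q i < s i + 1) := by
    intro s i h
    by_contra hc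
    rw [hbiti, if_neg hc] at h
    exact one_ne_zero h
  have hkey : ∀ s ∈ T, Even ((∑ i, ⌊s i⌋) - (∑ i, ⌊u i⌋) - (∑ i, bit s i)) := by
    intro s hs
    have heq : (∑ i, ⌊s i⌋) - (∑ i, ⌊u i⌋) - (∑ i, bit s i)
        = ∑ i, (⌊s i⌋ - ⌊u i⌋ - bit s i) := by
      rw [Finset.sum_sub_distrib, Finset.sum_sub_distrib]
    rw [heq]
    apply Finset.even_sum
    intro i _
    have hb := hball s hs i
    rw [hbiti]
    have hqm : q i < (⌊u i⌋ : ℝ) + 1 := by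
      have := hq_lt i; rwa [hmi i] at this
    refine coord_parity (u i) (s i) (q i) hb.1 hb.2 (hq1 i) hqm ?_ ?_
    · intro h; exact hVq i (s i) (hVmem1 i s hs (by rw [hmi i]; exact h))
    · intro h; exact hVq i (s i + 1) (hVmem2 i s hs (by rw [hmi i]; exact h))
  obtain ⟨s0, hs0T, hqs0⟩ := hex q hqu
  have hA0 : (∑ i, bit s0 i) = 0 := by
    apply Finset.sum_eq_zero
    intro i _
    rw [hbiti]
    exact if_pos (hqs0 i)
  have hDeven : ∀ s ∈ T, Even (∑ i, bit s i) := by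
    intro s hs
    have h2 := hkey s0 hs0T
    rw [hA0, sub_zero, Int.even_sub] at h2
    have hAU : Even ((∑ i, ⌊s i⌋) - (∑ i, ⌊u i⌋)) := by
      rw [Int.even_sub, hmono s (hTsub hs) s0 (hTsub hs0T)]
      exact h2
    have h1 := hkey s hs
    rw [Int.even_sub] at h1
    exact h1.mp hAU
  -- the main argument: s0's cube is all of cube u
  have hsj : ∀ j : Fin d, ∀ y, u j ≤ y → y < u j + 1 → s0 j ≤ y ∧ y < s0 j + 1 := by
    intro j y hy1 hy2
    set x : Fin d → ℝ := Function.update q j y with hx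
    have hxu : x ∈ cube u := by
      intro i
      rcases eq_or_ne i j with rfl | hij
      · simpa [hx] using ⟨hy1, hy2⟩
      · simp only [hx, Function.update_of_ne hij]
        exact hqu i
    obtain ⟨B, hBT, hxB⟩ := hex x hxu
    have hbit0 : ∀ i, i ≠ j → bit B i = 0 := by
      intro i hij
      have hxi := hxB i
      rw [hx, Function.update_of_ne hij] at hxi
      rw [hbiti]
      exact if_pos hxi
    have hsum : (∑ i, bit B i) = bit B j :=
      Finset.sum_eq_single j (fun i _ hij => hbit0 i hij) (by simp)
    have hBj : bit B j = 0 := by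
      have hev := hDeven B hBT
      rw [hsum] at hev
      rcases hbit01 B j with h | h
      · exact h
      · rw [h] at hev; exact absurd hev (by decide)
    have hqB : q ∈ cube B := by
      intro i
      rcases eq_or_ne i j with rfl | hij
      · exact hbit_cond B i hBj
      · exact hbit_cond B i (hbit0 i hij)
    have hBs0 : B = s0 := huniq B hBT s0 hs0T q hqB hqs0
    have hxj := hxB j
    rw [hBs0] at hxj
    rw [hx, Function.update_self] at hxj
    exact hxj
  have hs0u : s0 = u := by
    funext j
    have h1 : s0 j ≤ u j := (hsj j (u j) le_rfl (by linarith)).1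
    have h2 : u j ≤ s0 j := by
      by_contra hlt
      push_neg at hlt
      have hy1 : u j ≤ max (u j) (s0 j + 1) := le_max_left _ _
      have hy2 : max (u j) (s0 j + 1) < u j + 1 := max_lt (by linarith) (by linarith)
      have h3 := (hsj j _ hy1 hy2).2
      have h4 : s0 j + 1 ≤ max (u j) (s0 j + 1) := le_max_right _ _
      linarith
    linarith
  rw [← hs0u]
  exact hTsub hs0T

theorem stmt_6 {d : ℕ} (S : Set (Fin d → ℝ))
    (hpack : ∀ s ∈ S, ∀ s' ∈ S, s ≠ s' → Disjoint (cube s) (cube s')) :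
    ∃ S0 S1 : Set (Fin d → ℝ), S0 ∪ S1 = S ∧ Disjoint S0 S1 ∧
      (∀ u : Fin d → ℝ, cube u ⊆ ⋃ s ∈ S0, cube s → u ∈ S0) ∧
      (∀ u : Fin d → ℝ, cube u ⊆ ⋃ s ∈ S1, cube s → u ∈ S1) := by
  classical
  refine ⟨{s | s ∈ S ∧ Even (∑ i, ⌊s i⌋)}, {s | s ∈ S ∧ ¬ Even (∑ i, ⌊s i⌋)}, ?_, ?_, ?_, ?_⟩
  · ext s
    simp only [Set.mem_union, Set.mem_setOf_eq]
    tauto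
  · rw [Set.disjoint_left]
    rintro s ⟨-, h⟩ ⟨-, h'⟩
    exact h' h
  · exact fun u hu => rough_main S hpack _ (fun s hs => hs.1)
      (fun s hs t ht => iff_of_true hs.2 ht.2) u hu
  · exact fun u hu => rough_main S hpack _ (fun s hs => hs.1)
      (fun s hs t ht => iff_of_false hs.2 ht.2) u hu
end

section
/- Suppose s, t ∈ ℝ^d and the polynomials Q_s and Q_t (in variables indexed by pairs (i, a)) satisfy Q_s + Q_t = 0, where Q_s(x) = (-1)^{|{i : s_i > 0}|} ∏_{i : s_i > 0} x(i, s_i) · ∏_{i : s_i < 0} x(i, s_i + 1), and similarly for Q_t, with all |s_i|, |t_i| < 1 and s ≠ t. Then s - t ∈ {-1,0,1}^d and the number |{i : |s_i - t_i| = 1}| is odd. -/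
open MvPolynomial

/-- The polynomial `Q_s` in variables indexed by pairs `(i, a)`. -/
noncomputable def Q {d : ℕ} (s : Fin d → ℝ) : MvPolynomial (Fin d × ℝ) ℝ :=
  C ((-1 : ℝ) ^ (Finset.univ.filter (fun i => 0 < s i)).card) *
    (∏ i ∈ Finset.univ.filter (fun i => 0 < s i), X (i, s i)) *
    (∏ i ∈ Finset.univ.filter (fun i => s i < 0), X (i, s i + 1))

/-- The exponent finsupp of `Q s`. -/
noncomputable def Qm {d : ℕ} (s : Fin d → ℝ) : (Fin d × ℝ) →₀ ℕ :=
  (∑ i ∈ Finset.univ.filter (fun i => 0 < s i), Finsupp.single (i, s i) 1) +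
  (∑ i ∈ Finset.univ.filter (fun i => s i < 0), Finsupp.single (i, s i + 1) 1)

lemma prod_X_eq_monomial {d : ℕ} (F : Finset (Fin d)) (f : Fin d → Fin d × ℝ) :
    (∏ i ∈ F, (X (f i) : MvPolynomial (Fin d × ℝ) ℝ)) =
      monomial (∑ i ∈ F, Finsupp.single (f i) 1) 1 := by
  rw [monomial_sum_one]
  refine Finset.prod_congr rfl fun i _ => ?_
  rw [← X_pow_eq_monomial, pow_one]

lemma Q_eq_monomial {d : ℕ} (s : Fin d → ℝ) :
    Q s = monomial (Qm s)
      ((-1 : ℝ) ^ (Finset.univ.filter (fun i => 0 < s i)).card) := by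
  rw [Q, prod_X_eq_monomial, prod_X_eq_monomial, mul_assoc, monomial_mul, mul_one,
    C_mul_monomial, mul_one, Qm]

lemma sum_single_apply {d : ℕ} (F : Finset (Fin d)) (f : Fin d → ℝ) (i : Fin d) (a : ℝ) :
    (∑ j ∈ F, Finsupp.single (j, f j) (1 : ℕ)) (i, a) =
      if i ∈ F ∧ f i = a then 1 else 0 := by
  classical
  rw [Finsupp.finset_sum_apply]
  by_cases hi : i ∈ F ∧ f i = a
  · rw [if_pos hi, Finset.sum_eq_single_of_mem i hi.1]
    · simp [hi.2]
    · intro j hj hne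
      rw [Finsupp.single_apply, if_neg]
      simp only [Prod.mk.injEq, not_and]
      intro hji; exact absurd hji hne
  · rw [if_neg hi, Finset.sum_eq_zero]
    intro j hj
    rw [Finsupp.single_apply, if_neg]
    simp only [Prod.mk.injEq, not_and]
    intro hji hfa
    subst hji
    exact hi ⟨hj, hfa⟩

lemma Qm_apply {d : ℕ} (s : Fin d → ℝ) (i : Fin d) (a : ℝ) :
    Qm s (i, a) = (if 0 < s i ∧ s i = a then 1 else 0) +
      (if s i < 0 ∧ s i + 1 = a then 1 else 0) := by
  rw [Qm, Finsupp.add_apply, sum_single_apply, sum_single_apply]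
  simp [Finset.mem_filter]

lemma Qm_ne_zero {d : ℕ} (s : Fin d → ℝ) (i : Fin d) (a : ℝ)
    (h : Qm s (i, a) ≠ 0) : (0 < s i ∧ s i = a) ∨ (s i < 0 ∧ s i + 1 = a) := by
  rw [Qm_apply] at h
  split_ifs at h with h1 h2 h2
  · exact Or.inl h1
  · exact Or.inl h1
  · exact Or.inr h2
  · simp at h

/-- Per-coordinate case analysis. -/
lemma per_i {d : ℕ} (s t : Fin d → ℝ) (hm : Qm s = Qm t) (i : Fin d) :
    (0 < s i ∧ 0 < t i ∧ s i - t i = 0) ∨ (s i < 0 ∧ t i < 0 ∧ s i - t i = 0) ∨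
    (s i = 0 ∧ t i = 0) ∨ (0 < s i ∧ t i < 0 ∧ s i - t i = 1) ∨
    (s i < 0 ∧ 0 < t i ∧ s i - t i = -1) := by
  rcases lt_trichotomy (s i) 0 with hsi | hsi | hsi
  · -- s i < 0, look at Qm s (i, s i + 1) = 1
    have h1 : Qm t (i, s i + 1) ≠ 0 := by
      rw [← hm, Qm_apply]
      have : ¬ (0 < s i) := not_lt.2 hsi.le
      simp [hsi, this]
    rcases Qm_ne_zero t i _ h1 with ⟨hti, he⟩ | ⟨hti, he⟩
    · exact Or.inr (Or.inr (Or.inr (Or.inr ⟨hsi, hti, by linarith⟩)))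
    · exact Or.inr (Or.inl ⟨hsi, hti, by linarith⟩)
  · -- s i = 0 : need t i = 0
    have hz : ∀ a, Qm t (i, a) = 0 := by
      intro a
      rw [← hm, Qm_apply, hsi]
      norm_num
    rcases lt_trichotomy (t i) 0 with hti | hti | hti
    · have := hz (t i + 1)
      rw [Qm_apply] at this
      simp [hti, not_lt.2 hti.le] at this
    · exact Or.inr (Or.inr (Or.inl ⟨hsi, hti⟩))
    · have := hz (t i)
      rw [Qm_apply] at this
      simp [hti, not_lt.2 hti.le] at this
  · -- 0 < s i
    have h1 : Qm t (i, s i) ≠ 0 := by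
      rw [← hm, Qm_apply]
      have : ¬ (s i < 0) := not_lt.2 hsi.le
      simp [hsi, this]
    rcases Qm_ne_zero t i _ h1 with ⟨hti, he⟩ | ⟨hti, he⟩
    · exact Or.inl ⟨hsi, hti, by linarith⟩
    · exact Or.inr (Or.inr (Or.inr (Or.inl ⟨hsi, hti, by linarith⟩)))

theorem stmt_15 {d : ℕ} (s t : Fin d → ℝ)
    (hs : ∀ i, |s i| < 1) (ht : ∀ i, |t i| < 1) (hst : s ≠ t)
    (h : Q s + Q t = 0) :
    (∀ i, s i - t i ∈ ({-1, 0, 1} : Set ℝ)) ∧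
      Odd (Finset.univ.filter (fun i => |s i - t i| = 1)).card := by
  classical
  rw [Q_eq_monomial, Q_eq_monomial, add_eq_zero_iff_eq_neg, ← map_neg (monomial (Qm t)),
    monomial_eq_monomial_iff] at h
  rcases h with ⟨hm, hc⟩ | ⟨hc, _⟩
  swap
  · exact absurd hc (by positivity)
  have hodd : Odd ((Finset.univ.filter (fun i => 0 < s i)).card +
      (Finset.univ.filter (fun i => 0 < t i)).card) := by
    rw [← Nat.not_even_iff_odd]
    intro hev
    have := hc
    rw [show ((-1:ℝ) ^ (Finset.univ.filter (fun i => 0 < t i)).card) =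
      (-1:ℝ) ^ (Finset.univ.filter (fun i => 0 < t i)).card from rfl] at this
    have h2 : ((-1:ℝ)) ^ ((Finset.univ.filter (fun i => 0 < s i)).card +
        (Finset.univ.filter (fun i => 0 < t i)).card) = 1 := hev.neg_one_pow
    rw [pow_add] at h2
    rw [this] at h2
    have h3 : ((-1:ℝ)) ^ (Finset.univ.filter (fun i => 0 < t i)).card ≠ 0 := by positivity
    nlinarith [sq_nonneg ((-1:ℝ) ^ (Finset.univ.filter (fun i => 0 < t i)).card)]
  have key := per_i s t hm
  constructor
  · intro i
    rcases key i with ⟨_, _, h0⟩ | ⟨_, _, h0⟩ | ⟨h1, h2⟩ | ⟨_, _, h0⟩ | ⟨_, _, h0⟩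
    · simp [h0]
    · simp [h0]
    · simp [h1, h2]
    · simp [h0]
    · simp [h0]
  · -- parity argument
    have habs : ∀ i, |s i - t i| = 1 ↔ ((0 < s i ∧ t i < 0) ∨ (s i < 0 ∧ 0 < t i)) := by
      intro i
      rcases key i with ⟨ha, hb, h0⟩ | ⟨ha, hb, h0⟩ | ⟨ha, hb⟩ | ⟨ha, hb, h0⟩ | ⟨ha, hb, h0⟩
      · constructor
        · intro hh; rw [h0] at hh; norm_num at hh
        · rintro (⟨h1, h2⟩ | ⟨h1, h2⟩) <;> linarith
      · constructor
        · intro hh; rw [h0] at hh; norm_num at hh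
        · rintro (⟨h1, h2⟩ | ⟨h1, h2⟩) <;> linarith
      · constructor
        · intro hh; rw [ha, hb] at hh; norm_num at hh
        · rintro (⟨h1, h2⟩ | ⟨h1, h2⟩) <;> linarith
      · exact ⟨fun _ => Or.inl ⟨ha, hb⟩, fun _ => by rw [h0]; norm_num⟩
      · exact ⟨fun _ => Or.inr ⟨ha, hb⟩, fun _ => by rw [h0]; norm_num⟩
    have hsplit : (Finset.univ.filter (fun i => |s i - t i| = 1)).card =
        (Finset.univ.filter (fun i => 0 < s i ∧ t i < 0)).card +
        (Finset.univ.filter (fun i => s i < 0 ∧ 0 < t i)).card := by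
      rw [← Finset.card_union_of_disjoint]
      · congr 1
        ext i
        simp only [Finset.mem_filter, Finset.mem_union, Finset.mem_univ, true_and, habs i]
      · rw [Finset.disjoint_left]
        intro i hi hi'
        simp only [Finset.mem_filter] at hi hi'
        linarith [hi.2.1, hi'.2.2]
    have hsA : (Finset.univ.filter (fun i => 0 < s i)).card =
        (Finset.univ.filter (fun i => 0 < s i ∧ 0 < t i)).card +
        (Finset.univ.filter (fun i => 0 < s i ∧ t i < 0)).card := by
      rw [← Finset.card_union_of_disjoint]
      · congr 1
        ext i
        simp only [Finset.mem_filter, Finset.mem_union, Finset.mem_univ, true_and]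
        constructor
        · intro hi
          rcases key i with ⟨ha, hb, _⟩ | ⟨ha, hb, _⟩ | ⟨ha, hb⟩ | ⟨ha, hb, _⟩ | ⟨ha, hb, _⟩
          · exact Or.inl ⟨hi, hb⟩
          · linarith
          · linarith
          · exact Or.inr ⟨hi, hb⟩
          · linarith
        · tauto
      · rw [Finset.disjoint_left]
        intro i hi hi'
        simp only [Finset.mem_filter] at hi hi'
        linarith [hi.2.2, hi'.2.2]
    have hsB : (Finset.univ.filter (fun i => 0 < t i)).card =
        (Finset.univ.filter (fun i => 0 < s i ∧ 0 < t i)).card +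
        (Finset.univ.filter (fun i => s i < 0 ∧ 0 < t i)).card := by
      rw [← Finset.card_union_of_disjoint]
      · congr 1
        ext i
        simp only [Finset.mem_filter, Finset.mem_union, Finset.mem_univ, true_and]
        constructor
        · intro hi
          rcases key i with ⟨ha, hb, _⟩ | ⟨ha, hb, _⟩ | ⟨ha, hb⟩ | ⟨ha, hb, _⟩ | ⟨ha, hb, _⟩
          · exact Or.inl ⟨ha, hi⟩
          · linarith
          · linarith
          · linarith
          · exact Or.inr ⟨ha, hi⟩
        · tauto
      · rw [Finset.disjoint_left]
        intro i hi hi'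
        simp only [Finset.mem_filter] at hi hi'
        linarith [hi.2.1, hi'.2.1]
    rw [hsA, hsB] at hodd
    rw [hsplit]
    rcases hodd with ⟨k, hk⟩
    exact ⟨k - (Finset.univ.filter (fun i => 0 < s i ∧ 0 < t i)).card, by omega⟩
end
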